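/- arXiv:1806.04306 — 4 statements merged into one kernel-verified Lean document; each statement's English description precedes it below -/
import Mathlib

section
/- Let a, b, c be real numbers with a ≠ 0, and let f(z) = az² + bz + c. If f(2)·f(-2) < 0, then f has two real roots z₁, z₂ (counted appropriately) with |z₁| < 2 < |z₂|. -/
lemma ivt_root (f : ℝ → ℝ) (hf : Continuous f) (h : f 2 * f (-2) < 0) :
    ∃ z ∈ Set.Ioo (-2 : ℝ) 2, f z = 0 := by
  have hcont : ContinuousOn f (Set.Icc (-2 : ℝ) 2) := hf.continuousOn
  rcases mul_neg_iff.mp h with ⟨h1, h2⟩ | ⟨h1, h2⟩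
  · have := intermediate_value_Ioo (by norm_num : (-2:ℝ) ≤ 2) hcont
      (Set.mem_Ioo.mpr ⟨h2, h1⟩)
    rcases this with ⟨z, hz, hfz⟩
    exact ⟨z, hz, hfz⟩
  · have := intermediate_value_Ioo' (by norm_num : (-2:ℝ) ≤ 2) hcont
      (Set.mem_Ioo.mpr ⟨h1, h2⟩)
    rcases this with ⟨z, hz, hfz⟩
    exact ⟨z, hz, hfz⟩

/-- if `f(z) = az² + bz + c` with `a ≠ 0` satisfies `f(2)·f(-2) < 0`,
then `f` has real roots `z₁, z₂` with `|z₁| < 2 < |z₂|`. -/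
theorem quadratic_roots_straddle (a b c : ℝ) (ha : a ≠ 0)
    (h : (a * 2 ^ 2 + b * 2 + c) * (a * (-2) ^ 2 + b * (-2) + c) < 0) :
    ∃ z₁ z₂ : ℝ, a * z₁ ^ 2 + b * z₁ + c = 0 ∧ a * z₂ ^ 2 + b * z₂ + c = 0 ∧
      |z₁| < 2 ∧ 2 < |z₂| := by
  have hf : Continuous fun z : ℝ => a * z ^ 2 + b * z + c := by continuity
  obtain ⟨z₁, hz₁mem, hz₁⟩ := ivt_root _ hf (by norm_num at h ⊢; linarith)
  set z₂ : ℝ := -(b / a) - z₁ with hz₂def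
  have habs : |z₁| < 2 := abs_lt.mpr ⟨hz₁mem.1, hz₁mem.2⟩
  have hz₂ : a * z₂ ^ 2 + b * z₂ + c = 0 := by
    have : a * z₂ ^ 2 + b * z₂ + c - (a * z₁ ^ 2 + b * z₁ + c) = 0 := by
      rw [hz₂def]; field_simp
      ring
    linarith
  refine ⟨z₁, z₂, hz₁, hz₂, habs, ?_⟩
  -- f(2)f(-2) = a²(z₁²-4)(z₂²-4)
  have key : (a * 2 ^ 2 + b * 2 + c) * (a * (-2) ^ 2 + b * (-2) + c)
      = a ^ 2 * (z₁ ^ 2 - 4) * (z₂ ^ 2 - 4) := by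
    have hb : b = -a * (z₁ + z₂) := by
      have := hz₁
      have := hz₂
      have hne : z₁ ≠ z₂ ∨ True := Or.inr trivial
      rw [hz₂def]; field_simp
      ring
    have hc : c = a * (z₁ * z₂) := by
      have : a * z₁ ^ 2 + (-a * (z₁ + z₂)) * z₁ + c = 0 := by rw [← hb]; exact hz₁
      nlinarith [this]
    rw [hb, hc]; ring
  have h1 : z₁ ^ 2 - 4 < 0 := by nlinarith [hz₁mem.1, hz₁mem.2]
  have ha2 : 0 < a ^ 2 := by positivity
  rw [key] at h
  have : 4 < z₂ ^ 2 := by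
    by_contra hle
    push_neg at hle
    have h0 : 0 ≤ a ^ 2 * ((4 - z₁ ^ 2) * (4 - z₂ ^ 2)) :=
      mul_nonneg ha2.le (mul_nonneg (by linarith) (by linarith))
    nlinarith [h0]
  have : 2 < |z₂| := by
    rcases abs_cases z₂ with ⟨he, _⟩ | ⟨he, _⟩ <;> nlinarith
  exact this
end

section
/- For N ≥ 1 and real Ω, the quantity Ξ_N built from the confluent hypergeometric polynomials satisfies the small-Ω expansion Ξ_N(Ω) = 2 - Ω² + O(Ω⁴) as Ω → 0. In particular |Ξ_N(Ω)| < 2 for all sufficiently small Ω > 0. -/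
open Complex Finset Filter Asymptotics
open scoped Topology

/-- Terminating confluent hypergeometric sum `∑_{m=0}^{n} ((a)_m/(b)_m) z^m/m!`. -/
noncomputable def hypF (a b : ℂ) (n : ℕ) (z : ℂ) : ℂ :=
  ∑ m ∈ Finset.range (n + 1),
    ((ascPochhammer ℂ m).eval a / (ascPochhammer ℂ m).eval b) * z ^ m / (Nat.factorial m)

/-- `F_N^+ = ₁F₁(-N, -2N-1, iΩ)`. -/
noncomputable def Fp (N : ℕ) (Ω : ℝ) : ℂ := hypF (-(N : ℂ)) (-(2 * (N : ℂ) + 1)) N (I * Ω)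

/-- `F_N^- = ₁F₁(-N, -2N-1, -iΩ)`. -/
noncomputable def Fm (N : ℕ) (Ω : ℝ) : ℂ := hypF (-(N : ℂ)) (-(2 * (N : ℂ) + 1)) N (-(I * Ω))

/-- `F_{N+1}^+ = ₁F₁(-N-1, -2N-1, iΩ)`. -/
noncomputable def Fp1 (N : ℕ) (Ω : ℝ) : ℂ :=
  hypF (-(N : ℂ) - 1) (-(2 * (N : ℂ) + 1)) (N + 1) (I * Ω)

/-- `F_{N+1}^- = ₁F₁(-N-1, -2N-1, -iΩ)`. -/
noncomputable def Fm1 (N : ℕ) (Ω : ℝ) : ℂ :=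
  hypF (-(N : ℂ) - 1) (-(2 * (N : ℂ) + 1)) (N + 1) (-(I * Ω))

/-- The quantity `Ξ_N`. -/
noncomputable def Xi (N : ℕ) (Ω : ℝ) : ℂ :=
  ((Fm N Ω) ^ 2 + (Fp N Ω) ^ 2 + (Fm1 N Ω) ^ 2 + (Fp1 N Ω) ^ 2) /
    (Fm N Ω * Fp1 N Ω + Fp N Ω * Fm1 N Ω)


/-- coefficient of the hypergeometric sum -/
noncomputable def cf (a b : ℂ) (m : ℕ) : ℂ :=
  (ascPochhammer ℂ m).eval a / (ascPochhammer ℂ m).eval b / (Nat.factorial m)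

lemma hyp_split (a b z : ℂ) (n : ℕ)
    (ha : ∀ m : ℕ, n < m → (ascPochhammer ℂ m).eval a = 0) :
    hypF a b n z = 1 + (a / b) * z + cf a b 2 * z^2 + cf a b 3 * z^3
      + z^4 * ∑ i ∈ Finset.range (n + 1), cf a b (4 + i) * z ^ i := by
  have hterm : ∀ m : ℕ,
      ((ascPochhammer ℂ m).eval a / (ascPochhammer ℂ m).eval b) * z ^ m / (Nat.factorial m)
        = cf a b m * z ^ m := by
    intro m; unfold cf; ring
  have h1 : hypF a b n z = ∑ m ∈ Finset.range (n + 5), cf a b m * z ^ m := by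
    unfold hypF
    rw [Finset.sum_congr rfl (fun m _ => hterm m)]
    refine Finset.sum_subset (Finset.range_subset_range.2 (by omega)) ?_
    intro m hm hm'
    simp only [Finset.mem_range] at hm hm'
    have : (ascPochhammer ℂ m).eval a = 0 := ha m (by omega)
    simp [cf, this]
  rw [h1, Finset.range_eq_Ico,
    ← Finset.sum_Ico_consecutive (fun m => cf a b m * z ^ m)
      (by omega : 0 ≤ 4) (by omega : 4 ≤ n + 5)]
  have h2 : ∑ m ∈ Finset.Ico 0 4, cf a b m * z ^ m
      = 1 + (a / b) * z + cf a b 2 * z^2 + cf a b 3 * z^3 := by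
    rw [← Finset.range_eq_Ico]
    simp [Finset.sum_range_succ, cf, ascPochhammer_one]
  have h3 : ∑ m ∈ Finset.Ico 4 (n + 5), cf a b m * z ^ m
      = z^4 * ∑ i ∈ Finset.range (n + 1), cf a b (4 + i) * z ^ i := by
    rw [Finset.sum_Ico_eq_sum_range]
    have : n + 5 - 4 = n + 1 := by omega
    rw [this, Finset.mul_sum]
    refine Finset.sum_congr rfl fun i _ => ?_
    rw [pow_add]; ring
  rw [h2, h3, Finset.range_eq_Ico]

/-- the polynomial appearing in the `Ω⁴` remainder -/
noncomputable def Hfun (j x d1 d2 d3 e2 e3 A B C D : ℂ) : ℂ := (4)*e3 + (-2)*e2 + (2)*e2^2 + (4)*d3 + (-2)*d2 + (-4)*d2*e2 + (2)*d2^2 + (2)*d1 + (-2)*d1^2 + (1)*x^2*D + (1)*x^2*C + (1)*x^2*B + (1)*x^2*A + (-2)*x^2*e3^2 + (-2)*x^2*e2*D + (-2)*x^2*e2*C + (2)*x^2*e2*B + (2)*x^2*e2*A + (-2)*x^2*d3 + (-4)*x^2*d3*e3 + (-2)*x^2*d3^2 + (2)*x^2*d2*D + (2)*x^2*d2*C +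 (-2)*x^2*d2*B + (-2)*x^2*d2*A + (2)*x^2*d2*e2 + (-2)*x^2*d1*e3 + (2)*x^2*d1*d3 + (1)*x^4*D^2 + (1)*x^4*C^2 + (-2)*x^4*B*C + (1)*x^4*B^2 + (-2)*x^4*A*D + (1)*x^4*A^2 + (-1)*x^4*e2*B + (-1)*x^4*e2*A + (2)*x^4*d3*e3 + (-1)*x^4*d2*D + (-1)*x^4*d2*C + (1)*x^6*B*C + (1)*x^6*A*D + (-2)*j*x*D + (2)*j*x*C + (-2)*j*x*B + (2)*j*x*A + (1)*j*x^3*B + (-1)*j*x^3*A + (2)*j*x^3*e3*D + (-2)*j*x^3*e3*C + (2)*j*x^3*e3*B + (-2)*j*x^3*e3*A + (2)*j*x^3*d3*D + (-2)*j*x^3*d3*C + (2)*j*x^3*d3*B + (-2)*j*x^3*d3*A + (1)*j*x^3*d1*D + (-1)*j*x^3*d1*C + (-1)*j*x^3*d1*B + (1)*j*x^3*d1*A + (-1)*j*x^5*e3*B + (1)*j*x^5*e3*A + (-1)*j*x^5*d3*D + (1)*j*x^5*d3*C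

lemma key_alg (j x d1 d2 d3 e2 e3 A B C D : ℂ) (hj : j^2 = -1) :
    ((1 + d1*(-(j*x)) + d2*(-(j*x))^2 + d3*(-(j*x))^3 + (-(j*x))^4*B)^2
      + (1 + d1*(j*x) + d2*(j*x)^2 + d3*(j*x)^3 + (j*x)^4*A)^2
      + (1 + (1-d1)*(-(j*x)) + e2*(-(j*x))^2 + e3*(-(j*x))^3 + (-(j*x))^4*D)^2
      + (1 + (1-d1)*(j*x) + e2*(j*x)^2 + e3*(j*x)^3 + (j*x)^4*C)^2)
    - (2 - x^2) *
      ((1 + d1*(-(j*x)) + d2*(-(j*x))^2 + d3*(-(j*x))^3 + (-(j*x))^4*B)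
        * (1 + (1-d1)*(j*x) + e2*(j*x)^2 + e3*(j*x)^3 + (j*x)^4*C)
      + (1 + d1*(j*x) + d2*(j*x)^2 + d3*(j*x)^3 + (j*x)^4*A)
        * (1 + (1-d1)*(-(j*x)) + e2*(-(j*x))^2 + e3*(-(j*x))^3 + (-(j*x))^4*D))
    = x^4 * Hfun j x d1 d2 d3 e2 e3 A B C D := by
  unfold Hfun
  linear_combination ((2)*x^2 + (-4)*x^4*e3 + (2)*x^4*e2 + (-2)*x^4*e2^2 + (-4)*x^4*d3 + (2)*x^4*d2 + (4)*x^4*d2*e2 + (-2)*x^4*d2^2 + (-2)*x^4*d1 + (2)*x^4*d1^2 + (-1)*x^6*D + (-1)*x^6*C + (-1)*x^6*B + (-1)*x^6*A + (2)*x^6*e3^2 + (2)*x^6*e2*D + (2)*x^6*e2*C + (-2)*x^6*e2*B + (-2)*x^6*e2*A + (2)*x^6*d3 + (4)*x^6*d3*e3 + (2)*x^6*d3^2 + (-2)*x^6*d2*D + (-2)*x^6*d2*C + (2)*x^6*d2*B + (2)*x^6*d2*A + (-2)*x^6*d2*e2 + (2)*x^6*d1*e3 + (-2)*x^6*d1*d3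 + (-1)*x^8*D^2 + (-1)*x^8*C^2 + (2)*x^8*B*C + (-1)*x^8*B^2 + (2)*x^8*A*D + (-1)*x^8*A^2 + (1)*x^8*e2*B + (1)*x^8*e2*A + (-2)*x^8*d3*e3 + (1)*x^8*d2*D + (1)*x^8*d2*C + (-1)*x^10*B*C + (-1)*x^10*A*D + (2)*j*x^5*D + (-2)*j*x^5*C + (2)*j*x^5*B + (-2)*j*x^5*A + (-1)*j*x^7*B + (1)*j*x^7*A + (-2)*j*x^7*e3*D + (2)*j*x^7*e3*C + (-2)*j*x^7*e3*B + (2)*j*x^7*e3*A + (-2)*j*x^7*d3*D + (2)*j*x^7*d3*C + (-2)*j*x^7*d3*B + (2)*j*x^7*d3*A + (-1)*j*x^7*d1*D + (1)*j*x^7*d1*C + (1)*j*x^7*d1*B + (-1)*j*x^7*d1*A + (1)*j*x^9*e3*B + (-1)*j*x^9*e3*A + (1)*j*x^9*d3*D + (-1)*j*x^9*d3*C + (4)*j^2*x^4*e3 + (2)*j^2*x^4*e2^2 + (4)*j^2*x^4*d3 + (-4)*j^2*x^4*d2*e2 + (2)*j^2*x^4*d2^2 + (1)*j^2*x^6*D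 + (1)*j^2*x^6*C + (1)*j^2*x^6*B + (1)*j^2*x^6*A + (-2)*j^2*x^6*e3^2 + (-2)*j^2*x^6*e2*D + (-2)*j^2*x^6*e2*C + (2)*j^2*x^6*e2*B + (2)*j^2*x^6*e2*A + (-2)*j^2*x^6*d3 + (-4)*j^2*x^6*d3*e3 + (-2)*j^2*x^6*d3^2 + (2)*j^2*x^6*d2*D + (2)*j^2*x^6*d2*C + (-2)*j^2*x^6*d2*B + (-2)*j^2*x^6*d2*A + (2)*j^2*x^6*d2*e2 + (-2)*j^2*x^6*d1*e3 + (2)*j^2*x^6*d1*d3 + (1)*j^2*x^8*D^2 + (1)*j^2*x^8*C^2 + (-2)*j^2*x^8*B*C + (1)*j^2*x^8*B^2 + (-2)*j^2*x^8*A*D + (1)*j^2*x^8*A^2 + (-1)*j^2*x^8*e2*B + (-1)*j^2*x^8*e2*A + (2)*j^2*x^8*d3*e3 + (-1)*j^2*x^8*d2*D + (-1)*j^2*x^8*d2*C + (1)*j^2*x^10*B*C + (1)*j^2*x^10*A*D + (-2)*j^3*x^5*D + (2)*j^3*x^5*C + (-2)*j^3*x^5*B + (2)*j^3*x^5*A +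 (1)*j^3*x^7*B + (-1)*j^3*x^7*A + (2)*j^3*x^7*e3*D + (-2)*j^3*x^7*e3*C + (2)*j^3*x^7*e3*B + (-2)*j^3*x^7*e3*A + (2)*j^3*x^7*d3*D + (-2)*j^3*x^7*d3*C + (2)*j^3*x^7*d3*B + (-2)*j^3*x^7*d3*A + (1)*j^3*x^7*d1*D + (-1)*j^3*x^7*d1*C + (-1)*j^3*x^7*d1*B + (1)*j^3*x^7*d1*A + (-1)*j^3*x^9*e3*B + (1)*j^3*x^9*e3*A + (-1)*j^3*x^9*d3*D + (1)*j^3*x^9*d3*C + (2)*j^4*x^6*e3^2 + (2)*j^4*x^6*e2*D + (2)*j^4*x^6*e2*C + (-2)*j^4*x^6*e2*B + (-2)*j^4*x^6*e2*A + (4)*j^4*x^6*d3*e3 + (2)*j^4*x^6*d3^2 + (-2)*j^4*x^6*d2*D + (-2)*j^4*x^6*d2*C + (2)*j^4*x^6*d2*B + (2)*j^4*x^6*d2*A + (-1)*j^4*x^8*D^2 + (-1)*j^4*x^8*C^2 + (2)*j^4*x^8*B*C + (-1)*j^4*x^8*B^2 + (2)*j^4*x^8*A*D + (-1)*j^4*x^8*A^2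 + (1)*j^4*x^8*e2*B + (1)*j^4*x^8*e2*A + (-2)*j^4*x^8*d3*e3 + (1)*j^4*x^8*d2*D + (1)*j^4*x^8*d2*C + (-1)*j^4*x^10*B*C + (-1)*j^4*x^10*A*D + (-2)*j^5*x^7*e3*D + (2)*j^5*x^7*e3*C + (-2)*j^5*x^7*e3*B + (2)*j^5*x^7*e3*A + (-2)*j^5*x^7*d3*D + (2)*j^5*x^7*d3*C + (-2)*j^5*x^7*d3*B + (2)*j^5*x^7*d3*A + (1)*j^5*x^9*e3*B + (-1)*j^5*x^9*e3*A + (1)*j^5*x^9*d3*D + (-1)*j^5*x^9*d3*C + (1)*j^6*x^8*D^2 + (1)*j^6*x^8*C^2 + (-2)*j^6*x^8*B*C + (1)*j^6*x^8*B^2 + (-2)*j^6*x^8*A*D + (1)*j^6*x^8*A^2 + (1)*j^6*x^10*B*C + (1)*j^6*x^10*A*D) * hj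

/-- tails -/
noncomputable def tailA (N : ℕ) (Ω : ℝ) : ℂ :=
  ∑ i ∈ Finset.range (N + 1), cf (-(N:ℂ)) (-(2*(N:ℂ)+1)) (4 + i) * (I * (Ω:ℂ)) ^ i
noncomputable def tailB (N : ℕ) (Ω : ℝ) : ℂ :=
  ∑ i ∈ Finset.range (N + 1), cf (-(N:ℂ)) (-(2*(N:ℂ)+1)) (4 + i) * (-(I * (Ω:ℂ))) ^ i
noncomputable def tailC (N : ℕ) (Ω : ℝ) : ℂ :=
  ∑ i ∈ Finset.range (N + 1 + 1), cf (-(N:ℂ)-1) (-(2*(N:ℂ)+1)) (4 + i) * (I * (Ω:ℂ)) ^ i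
noncomputable def tailD (N : ℕ) (Ω : ℝ) : ℂ :=
  ∑ i ∈ Finset.range (N + 1 + 1), cf (-(N:ℂ)-1) (-(2*(N:ℂ)+1)) (4 + i) * (-(I * (Ω:ℂ))) ^ i

@[fun_prop] lemma tailA_cont (N : ℕ) : Continuous (tailA N) := by
  unfold tailA; apply continuous_finset_sum; intro i _; fun_prop
@[fun_prop] lemma tailB_cont (N : ℕ) : Continuous (tailB N) := by
  unfold tailB; apply continuous_finset_sum; intro i _; fun_prop
@[fun_prop] lemma tailC_cont (N : ℕ) : Continuous (tailC N) := by
  unfold tailC; apply continuous_finset_sum; intro i _; fun_prop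
@[fun_prop] lemma tailD_cont (N : ℕ) : Continuous (tailD N) := by
  unfold tailD; apply continuous_finset_sum; intro i _; fun_prop

/-- for `N ≥ 1`, `Ξ_N(Ω) = 2 - Ω² + O(Ω⁴)` as `Ω → 0`; in particular
`|Ξ_N(Ω)| < 2` for all sufficiently small `Ω > 0`. -/
theorem Xi_expansion (N : ℕ) (hN : 1 ≤ N) :
    ((fun Ω : ℝ => Xi N Ω - (2 - (Ω : ℂ) ^ 2)) =O[𝓝 0] fun Ω : ℝ => Ω ^ 4) ∧
    ∃ δ > 0, ∀ Ω : ℝ, 0 < Ω → Ω < δ → ‖Xi N Ω‖ < 2 := by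
  have haN : ∀ m : ℕ, N < m → (ascPochhammer ℂ m).eval (-(N:ℂ)) = 0 :=
    fun m hm => ascPochhammer_eval_neg_coe_nat_of_lt hm
  have haN1 : ∀ m : ℕ, N + 1 < m → (ascPochhammer ℂ m).eval (-(N:ℂ) - 1) = 0 := by
    intro m hm
    have hcast : (-(N:ℂ) - 1) = -(((N+1 : ℕ) : ℂ)) := by push_cast; ring
    rw [hcast]; exact ascPochhammer_eval_neg_coe_nat_of_lt hm
  have hb : (-(2*(N:ℂ)+1)) ≠ 0 := by
    have h1 : ((2*N+1 : ℕ) : ℂ) ≠ 0 := Nat.cast_ne_zero.2 (by omega)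
    intro h; apply h1; push_cast; linear_combination -h
  set d1 : ℂ := -(N:ℂ) / (-(2*(N:ℂ)+1)) with hd1
  set d2 : ℂ := cf (-(N:ℂ)) (-(2*(N:ℂ)+1)) 2 with hd2
  set d3 : ℂ := cf (-(N:ℂ)) (-(2*(N:ℂ)+1)) 3 with hd3
  set e2 : ℂ := cf (-(N:ℂ)-1) (-(2*(N:ℂ)+1)) 2 with he2
  set e3 : ℂ := cf (-(N:ℂ)-1) (-(2*(N:ℂ)+1)) 3 with he3
  have he : (-(N:ℂ)-1) / (-(2*(N:ℂ)+1)) = 1 - d1 := by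
    rw [hd1, eq_sub_iff_add_eq, ← add_div, div_eq_one_iff_eq hb]; ring
  have hFp : ∀ Ω : ℝ, Fp N Ω
      = 1 + d1*(I*(Ω:ℂ)) + d2*(I*(Ω:ℂ))^2 + d3*(I*(Ω:ℂ))^3 + (I*(Ω:ℂ))^4 * tailA N Ω :=
    fun Ω => hyp_split _ _ _ _ haN
  have hFm : ∀ Ω : ℝ, Fm N Ω
      = 1 + d1*(-(I*(Ω:ℂ))) + d2*(-(I*(Ω:ℂ)))^2 + d3*(-(I*(Ω:ℂ)))^3 + (-(I*(Ω:ℂ)))^4 * tailB N Ω :=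
    fun Ω => hyp_split _ _ _ _ haN
  have hFp1 : ∀ Ω : ℝ, Fp1 N Ω
      = 1 + (1-d1)*(I*(Ω:ℂ)) + e2*(I*(Ω:ℂ))^2 + e3*(I*(Ω:ℂ))^3 + (I*(Ω:ℂ))^4 * tailC N Ω := by
    intro Ω
    have := hyp_split (-(N:ℂ)-1) (-(2*(N:ℂ)+1)) (I*(Ω:ℂ)) (N+1) haN1
    rw [he] at this
    exact this
  have hFm1 : ∀ Ω : ℝ, Fm1 N Ω
      = 1 + (1-d1)*(-(I*(Ω:ℂ))) + e2*(-(I*(Ω:ℂ)))^2 + e3*(-(I*(Ω:ℂ)))^3 + (-(I*(Ω:ℂ)))^4 * tailD N Ω := by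
    intro Ω
    have := hyp_split (-(N:ℂ)-1) (-(2*(N:ℂ)+1)) (-(I*(Ω:ℂ))) (N+1) haN1
    rw [he] at this
    exact this
  have hkey : ∀ Ω : ℝ,
      (Fm N Ω)^2 + (Fp N Ω)^2 + (Fm1 N Ω)^2 + (Fp1 N Ω)^2
        - (2 - (Ω:ℂ)^2) * (Fm N Ω * Fp1 N Ω + Fp N Ω * Fm1 N Ω)
      = (Ω:ℂ)^4 * Hfun I Ω d1 d2 d3 e2 e3 (tailA N Ω) (tailB N Ω) (tailC N Ω) (tailD N Ω) := by
    intro Ω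
    rw [hFm Ω, hFp Ω, hFm1 Ω, hFp1 Ω]
    exact key_alg I Ω d1 d2 d3 e2 e3 _ _ _ _ Complex.I_sq
  -- continuity
  have hH : Continuous (fun Ω : ℝ =>
      Hfun I Ω d1 d2 d3 e2 e3 (tailA N Ω) (tailB N Ω) (tailC N Ω) (tailD N Ω)) := by
    unfold Hfun; fun_prop
  have hFpc : Continuous (fun Ω : ℝ => Fp N Ω) := by
    rw [show (fun Ω : ℝ => Fp N Ω) = _ from funext hFp]; fun_prop
  have hFmc : Continuous (fun Ω : ℝ => Fm N Ω) := by
    rw [show (fun Ω : ℝ => Fm N Ω) = _ from funext hFm]; fun_prop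
  have hFp1c : Continuous (fun Ω : ℝ => Fp1 N Ω) := by
    rw [show (fun Ω : ℝ => Fp1 N Ω) = _ from funext hFp1]; fun_prop
  have hFm1c : Continuous (fun Ω : ℝ => Fm1 N Ω) := by
    rw [show (fun Ω : ℝ => Fm1 N Ω) = _ from funext hFm1]; fun_prop
  have hDc : Continuous (fun Ω : ℝ => Fm N Ω * Fp1 N Ω + Fp N Ω * Fm1 N Ω) :=
    (hFmc.mul hFp1c).add (hFpc.mul hFm1c)
  have hD0 : Fm N 0 * Fp1 N 0 + Fp N 0 * Fm1 N 0 = 2 := by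
    rw [hFp 0, hFm 0, hFp1 0, hFm1 0]
    norm_num
  have hDT : Filter.Tendsto (fun Ω : ℝ => Fm N Ω * Fp1 N Ω + Fp N Ω * Fm1 N Ω) (𝓝 0) (𝓝 2) := by
    have := hDc.tendsto 0
    rwa [hD0] at this
  have hne : ∀ᶠ Ω : ℝ in 𝓝 0, Fm N Ω * Fp1 N Ω + Fp N Ω * Fm1 N Ω ≠ 0 :=
    hDT.eventually_ne two_ne_zero
  have hinv : Filter.Tendsto (fun Ω : ℝ => (Fm N Ω * Fp1 N Ω + Fp N Ω * Fm1 N Ω)⁻¹)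
      (𝓝 0) (𝓝 (2⁻¹ : ℂ)) := hDT.inv₀ two_ne_zero
  have heq : (fun Ω : ℝ => Xi N Ω - (2 - (Ω:ℂ)^2)) =ᶠ[𝓝 0]
      (fun Ω : ℝ => ((Fm N Ω)^2 + (Fp N Ω)^2 + (Fm1 N Ω)^2 + (Fp1 N Ω)^2
        - (2 - (Ω:ℂ)^2) * (Fm N Ω * Fp1 N Ω + Fp N Ω * Fm1 N Ω))
        * (Fm N Ω * Fp1 N Ω + Fp N Ω * Fm1 N Ω)⁻¹) := by
    filter_upwards [hne] with Ω hΩ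
    unfold Xi
    field_simp
  have h1 : (fun Ω : ℝ => ((Fm N Ω)^2 + (Fp N Ω)^2 + (Fm1 N Ω)^2 + (Fp1 N Ω)^2
      - (2 - (Ω:ℂ)^2) * (Fm N Ω * Fp1 N Ω + Fp N Ω * Fm1 N Ω)))
      =O[𝓝 0] fun Ω : ℝ => Ω^4 := by
    rw [show (fun Ω : ℝ => ((Fm N Ω)^2 + (Fp N Ω)^2 + (Fm1 N Ω)^2 + (Fp1 N Ω)^2
      - (2 - (Ω:ℂ)^2) * (Fm N Ω * Fp1 N Ω + Fp N Ω * Fm1 N Ω))) = _ from funext hkey]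
    have ha : (fun Ω : ℝ => ((Ω:ℂ)^4)) =O[𝓝 0] (fun Ω : ℝ => Ω^4) := by
      apply Asymptotics.isBigO_of_le
      intro x
      simp [Complex.norm_real]
    have hb2 : (fun Ω : ℝ =>
        Hfun I Ω d1 d2 d3 e2 e3 (tailA N Ω) (tailB N Ω) (tailC N Ω) (tailD N Ω))
        =O[𝓝 0] (fun _ : ℝ => (1:ℝ)) := (hH.tendsto 0).isBigO_one ℝ
    simpa using ha.mul hb2
  have hinvO : (fun Ω : ℝ => (Fm N Ω * Fp1 N Ω + Fp N Ω * Fm1 N Ω)⁻¹)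
      =O[𝓝 0] (fun _ : ℝ => (1:ℝ)) := hinv.isBigO_one ℝ
  have part1 : (fun Ω : ℝ => Xi N Ω - (2 - (Ω:ℂ)^2)) =O[𝓝 0] fun Ω : ℝ => Ω^4 := by
    have h2 := h1.mul hinvO
    simp only [mul_one] at h2
    exact h2.congr' heq.symm (Filter.EventuallyEq.refl _ _)
  refine ⟨part1, ?_⟩
  obtain ⟨c, hc⟩ := Asymptotics.isBigO_iff.mp part1
  rw [Metric.eventually_nhds_iff] at hc
  obtain ⟨ε, hε, hcb⟩ := hc
  set C : ℝ := max c 0 with hCdef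
  have hC0 : 0 ≤ C := le_max_right _ _
  refine ⟨min ε (min 1 (1/(C+1))), by positivity, ?_⟩
  intro Ω hΩpos hΩlt
  have h2 : Ω < ε := lt_of_lt_of_le hΩlt (min_le_left _ _)
  have h3 : Ω < 1 := lt_of_lt_of_le hΩlt (le_trans (min_le_right _ _) (min_le_left _ _))
  have h4 : Ω < 1/(C+1) := lt_of_lt_of_le hΩlt (le_trans (min_le_right _ _) (min_le_right _ _))
  have hbnd := hcb (y := Ω) (by simpa [Real.dist_eq, abs_of_pos hΩpos] using h2)
  rw [Real.norm_eq_abs, _root_.abs_of_nonneg (by positivity : (0:ℝ) ≤ Ω^4)] at hbnd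
  have hbnd2 : ‖Xi N Ω - (2 - (Ω:ℂ)^2)‖ ≤ C * Ω^4 := by
    have : c * Ω^4 ≤ C * Ω^4 := by
      have := le_max_left c 0
      nlinarith [pow_pos hΩpos 4]
    linarith
  have habs : ‖Xi N Ω‖ ≤ ‖(2 - (Ω:ℂ)^2)‖ + ‖Xi N Ω - (2 - (Ω:ℂ)^2)‖ := by
    have hsplit : Xi N Ω = (2 - (Ω:ℂ)^2) + (Xi N Ω - (2 - (Ω:ℂ)^2)) := by ring
    calc ‖Xi N Ω‖ = ‖(2 - (Ω:ℂ)^2) + (Xi N Ω - (2 - (Ω:ℂ)^2))‖ := by rw [← hsplit]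
    _ ≤ _ := norm_add_le _ _
  have hn2 : ‖(2 - (Ω:ℂ)^2)‖ = 2 - Ω^2 := by
    have hcast : (2 - (Ω:ℂ)^2) = (((2 - Ω^2 : ℝ)) : ℂ) := by push_cast; ring
    rw [hcast, Complex.norm_real, Real.norm_eq_abs, _root_.abs_of_nonneg]
    nlinarith
  have hmain : Ω * (C + 1) < 1 := by
    rw [lt_div_iff₀ (by positivity)] at h4
    linarith
  have hq : C * Ω^2 < 1 := by
    nlinarith [mul_nonneg (mul_nonneg hC0 hΩpos.le) (sub_nonneg.2 h3.le)]
  have hlt : C * Ω^4 < Ω^2 := by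
    nlinarith [mul_pos (sub_pos.2 hq) (pow_pos hΩpos 2)]
  calc ‖Xi N Ω‖ ≤ ‖(2 - (Ω:ℂ)^2)‖ + ‖Xi N Ω - (2 - (Ω:ℂ)^2)‖ := habs
  _ ≤ (2 - Ω^2) + C * Ω^4 := by rw [hn2]; linarith
  _ < 2 := by linarith
end

section
/- Define the Padé remainder E_N(Ω) = (e^{iΩ} - F_{N+1}^+(Ω)/F_N^-(Ω))/e^{iΩ} for the [N+1/N] Padé approximant of e^{iΩ}. Then as Ω → 0: Re(E_N) = -(Ω^{2N+2}/2)·[N!/(2N+1)!]² + O(Ω^{2N+4}) and Im(E_N) = Ω^{2N+3}·(N+1)/((2N+1)(2N+3))·[N!/(2N+1)!]² + O(Ω^{2N+5}). -/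
open Complex Finset Filter Asymptotics
open scoped Topology

/-- The Padé remainder `E_N(Ω) = 1 - e^{-iΩ} F_{N+1}^+(Ω)/F_N^-(Ω)`. -/
noncomputable def padeE (N : ℕ) (Ω : ℝ) : ℂ :=
  1 - Complex.exp (-(I * Ω)) * Fp1 N Ω / Fm N Ω

namespace PadeAux

open Finset Polynomial


lemma poch_eval_neg_eq (n : ℕ) : ∀ m : ℕ, m ≤ n →
    (ascPochhammer ℝ m).eval (-(n:ℝ))
      = (-1)^m * (Nat.factorial n) / (Nat.factorial (n - m)) := by
  intro m
  induction m with
  | zero =>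
    intro _
    have : (Nat.factorial n : ℝ) ≠ 0 := by positivity
    simp [div_self this]
  | succ m ih =>
    intro h
    have hm : m ≤ n := Nat.le_of_succ_le h
    have hlt : m < n := h
    rw [ascPochhammer_succ_right, eval_mul, ih hm]
    have hfac : (Nat.factorial (n - m) : ℝ)
        = ((n - m : ℕ) : ℝ) * (Nat.factorial (n - (m+1)) : ℝ) := by
      have : n - m = (n - (m+1)) + 1 := by omega
      rw [this, Nat.factorial_succ]
      push_cast [Nat.sub_sub]
      ring_nf
    have hx : eval (-(n:ℝ)) (X + (m : ℝ[X])) = -(((n - m : ℕ)) : ℝ) := by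
      simp [eval_add]
      push_cast [Nat.cast_sub hm]
      ring
    rw [hx, hfac, pow_succ]
    have h1 : ((n - m : ℕ) : ℝ) ≠ 0 := by
      have : 0 < n - m := by omega
      positivity
    have h2 : (Nat.factorial (n - (m+1)) : ℝ) ≠ 0 := by positivity
    set f := (Nat.factorial (n - (m+1)) : ℝ) with hf
    set a := ((n - m : ℕ) : ℝ) with ha
    field_simp

lemma poch_eval_neg_zero (n : ℕ) : ∀ m : ℕ, n < m →
    (ascPochhammer ℝ m).eval (-(n:ℝ)) = 0 := by
  intro m
  induction m with
  | zero => omega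
  | succ m ih =>
    intro h
    rw [ascPochhammer_succ_right, eval_mul]
    rcases Nat.lt_or_ge n m with h'|h'
    · rw [ih h', zero_mul]
    · have : n = m := by omega
      subst this
      simp [eval_add]

lemma poch_eval_neg_ne (n m : ℕ) (h : m ≤ n) :
    (ascPochhammer ℝ m).eval (-(n:ℝ)) ≠ 0 := by
  rw [poch_eval_neg_eq n m h]
  have h1 : (Nat.factorial n : ℝ) > 0 := by positivity
  have h2 : (Nat.factorial (n - m) : ℝ) > 0 := by positivity
  have h3 : ((-1:ℝ))^m ≠ 0 := by
    apply pow_ne_zero; norm_num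
  positivity


noncomputable def qr (N m : ℕ) : ℝ :=
  (ascPochhammer ℝ m).eval (-((N:ℕ):ℝ)) / (ascPochhammer ℝ m).eval (-(((2*N+1:ℕ)):ℝ))
    / (Nat.factorial m)

noncomputable def wr (N m : ℕ) : ℝ :=
  (-1)^m * (ascPochhammer ℝ m).eval (-(((N+1:ℕ)):ℝ))
    / (ascPochhammer ℝ m).eval (-(((2*N+1:ℕ)):ℝ)) / (Nat.factorial m)

lemma qr_zero (N : ℕ) : qr N 0 = 1 := by simp [qr]

lemma wr_zero (N : ℕ) : wr N 0 = 1 := by simp [wr]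

lemma qr_eq_zero (N m : ℕ) (h : N < m) : qr N m = 0 := by
  rw [qr, poch_eval_neg_zero N m h]
  simp

lemma wr_eq_zero (N m : ℕ) (h : N + 1 < m) : wr N m = 0 := by
  rw [wr, poch_eval_neg_zero (N+1) m h]
  simp

lemma qr_one (N : ℕ) : qr N 1 = (N:ℝ) / (2*(N:ℝ)+1) := by
  have h : (0:ℝ) < 2*(N:ℝ)+1 := by positivity
  simp only [qr, ascPochhammer_one, eval_X]
  push_cast
  rw [Nat.factorial_one]
  push_cast
  rw [neg_div_neg_eq]
  simp

lemma key_div (A B f c n mr : ℝ) (hB : B ≠ 0) (hf : f ≠ 0) (hc : mr - c ≠ 0)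
    (h1 : mr + 1 ≠ 0) :
    (mr+1) * (mr - c) * (A * (mr - n) / (B * (mr - c)) / ((mr+1) * f))
      = (mr - n) * (A / B / f) := by
  field_simp

lemma key_div2 (p A B f c n mr : ℝ) (hB : B ≠ 0) (hf : f ≠ 0) (hc : mr - c ≠ 0)
    (h1 : mr + 1 ≠ 0) :
    (mr+1) * (mr - c) * (p * (-1) * (A * (mr - n)) / (B * (mr - c)) / ((mr+1) * f))
      = (n - mr) * (p * A / B / f) := by
  field_simp
  ring

lemma qr_rec (N m : ℕ) :
    ((m:ℝ)+1) * ((m:ℝ) - (2*N+1)) * qr N (m+1) = ((m:ℝ) - N) * qr N m := by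
  rcases Nat.lt_trichotomy m (2*N+1) with h|h|h
  · have hb : (ascPochhammer ℝ m).eval (-(((2*N+1:ℕ)):ℝ)) ≠ 0 :=
      poch_eval_neg_ne (2*N+1) m (by omega)
    have hfac : (Nat.factorial (m+1) : ℝ) = ((m:ℝ)+1) * (Nat.factorial m : ℝ) := by
      rw [Nat.factorial_succ]; push_cast; ring
    have hm1 : ((m:ℝ)+1) ≠ 0 := by positivity
    have hmr : (m:ℝ) < 2*(N:ℝ)+1 := by exact_mod_cast h
    have hmd : ((m:ℝ) - (2*(N:ℝ)+1)) ≠ 0 := by intro hc; linarith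
    have hfm : (Nat.factorial m : ℝ) ≠ 0 := by positivity
    simp only [qr, ascPochhammer_succ_right, eval_mul, eval_add, eval_X, eval_natCast, hfac]
    push_cast
    push_cast at hb
    set A := (ascPochhammer ℝ m).eval (-(N:ℝ)) with hA
    set B := (ascPochhammer ℝ m).eval (-(2*(N:ℝ)+1)) with hB
    linear_combination key_div A B (Nat.factorial m : ℝ) (2*(N:ℝ)+1) (N:ℝ) (m:ℝ) hb hfm hmd hm1
  · subst h
    have hq : qr N (2*N+1) = 0 := qr_eq_zero N (2*N+1) (by omega)
    rw [hq, mul_zero]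
    have hz : ((2*N+1:ℕ):ℝ) - (2*(N:ℝ)+1) = 0 := by push_cast; ring
    rw [hz, mul_zero, zero_mul]
  · have h1 : qr N m = 0 := qr_eq_zero N m (by omega)
    have h2 : qr N (m+1) = 0 := qr_eq_zero N (m+1) (by omega)
    rw [h1, h2]; ring

lemma wr_rec (N m : ℕ) :
    ((m:ℝ)+1) * ((m:ℝ) - (2*N+1)) * wr N (m+1) = ((N:ℝ) + 1 - m) * wr N m := by
  rcases Nat.lt_trichotomy m (2*N+1) with h|h|h
  · have hb : (ascPochhammer ℝ m).eval (-(((2*N+1:ℕ)):ℝ)) ≠ 0 :=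
      poch_eval_neg_ne (2*N+1) m (by omega)
    have hfac : (Nat.factorial (m+1) : ℝ) = ((m:ℝ)+1) * (Nat.factorial m : ℝ) := by
      rw [Nat.factorial_succ]; push_cast; ring
    have hm1 : ((m:ℝ)+1) ≠ 0 := by positivity
    have hmr : (m:ℝ) < 2*(N:ℝ)+1 := by exact_mod_cast h
    have hmd : ((m:ℝ) - (2*(N:ℝ)+1)) ≠ 0 := by intro hc; linarith
    have hfm : (Nat.factorial m : ℝ) ≠ 0 := by positivity
    simp only [wr, ascPochhammer_succ_right, eval_mul, eval_add, eval_X, eval_natCast, hfac,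
      pow_succ]
    push_cast
    push_cast at hb
    set A := (ascPochhammer ℝ m).eval (-((N:ℝ)+1)) with hA
    set B := (ascPochhammer ℝ m).eval (-(2*(N:ℝ)+1)) with hB
    linear_combination key_div2 ((-1:ℝ)^m) A B (Nat.factorial m : ℝ) (2*(N:ℝ)+1) ((N:ℝ)+1)
      (m:ℝ) hb hfm hmd hm1
  · subst h
    rcases Nat.eq_zero_or_pos N with hN|hN
    · subst hN
      norm_num
    · have hw : wr N (2*N+1) = 0 := wr_eq_zero N (2*N+1) (by omega)
      rw [hw, mul_zero]
      have hz : ((2*N+1:ℕ):ℝ) - (2*(N:ℝ)+1) = 0 := by push_cast; ring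
      rw [hz, mul_zero, zero_mul]
  · have h1 : wr N m = 0 := wr_eq_zero N m (by omega)
    have h2 : wr N (m+1) = 0 := wr_eq_zero N (m+1) (by omega)
    rw [h1, h2]; ring


noncomputable def Sr (N k : ℕ) : ℝ :=
  ∑ m ∈ Finset.range (k+1), wr N m / (Nat.factorial (k - m))

noncomputable def tfun (N k m : ℕ) : ℝ :=
  -(m:ℝ) * ((m:ℝ) - (2*(N:ℝ)+2)) * wr N m / (Nat.factorial (k+1-m))

lemma key_tele (w w1 F kr mr Nr : ℝ) (hF : F ≠ 0) (h1 : kr - mr + 1 ≠ 0)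
    (hw : (mr+1) * (mr - (2*Nr+1)) * w1 = (Nr + 1 - mr) * w) :
    (kr+1) * (kr - (2*Nr+1)) * (w / ((kr-mr+1)*F)) - (kr-Nr) * (w/F)
      = -(mr+1) * ((mr+1) - (2*Nr+2)) * w1 / F
        - (-mr * (mr - (2*Nr+2)) * w / ((kr-mr+1)*F)) := by
  have hw1 : -(mr+1) * ((mr+1) - (2*Nr+2)) * w1 / F = -((Nr + 1 - mr) * w) / F := by
    rw [show (-(mr+1) * ((mr+1) - (2*Nr+2)) * w1 : ℝ)
      = -((mr+1) * (mr - (2*Nr+1)) * w1) by ring, hw]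
  rw [hw1]
  field_simp
  ring

lemma Sr_rec (N k : ℕ) :
    ((k:ℝ)+1) * ((k:ℝ) - (2*(N:ℝ)+1)) * Sr N (k+1) = ((k:ℝ) - (N:ℝ)) * Sr N k := by
  have hstep : ∀ m ∈ Finset.range (k+1),
      ((k:ℝ)+1) * ((k:ℝ) - (2*(N:ℝ)+1)) * (wr N m / (Nat.factorial (k+1-m)))
        - ((k:ℝ) - (N:ℝ)) * (wr N m / (Nat.factorial (k-m)))
      = tfun N k (m+1) - tfun N k m := by
    intro m hm
    have hmk : m ≤ k := Nat.lt_succ_iff.mp (Finset.mem_range.mp hm)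
    have hmkr : (m:ℝ) ≤ k := by exact_mod_cast hmk
    have h1 : (k:ℝ) - m + 1 ≠ 0 := by intro hc; linarith
    have hF : (Nat.factorial (k-m) : ℝ) ≠ 0 := by positivity
    have e1 : k + 1 - (m+1) = k - m := by omega
    have e2 : (Nat.factorial (k+1-m) : ℝ) = ((k:ℝ) - m + 1) * (Nat.factorial (k-m) : ℝ) := by
      have h3 : k + 1 - m = (k - m) + 1 := by omega
      rw [h3, Nat.factorial_succ]
      push_cast [Nat.cast_sub hmk]
      ring
    unfold tfun
    rw [e1, e2]
    push_cast
    linear_combination key_tele (wr N m) (wr N (m+1)) (Nat.factorial (k-m) : ℝ)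
      (k:ℝ) (m:ℝ) (N:ℝ) hF h1 (wr_rec N m)
  have expand1 : ((k:ℝ)+1) * ((k:ℝ) - (2*(N:ℝ)+1)) * Sr N (k+1)
      = ∑ m ∈ Finset.range (k+2),
          ((k:ℝ)+1) * ((k:ℝ) - (2*(N:ℝ)+1)) * (wr N m / (Nat.factorial (k+1-m))) := by
    rw [Sr, Finset.mul_sum]
  have expand2 : ((k:ℝ) - (N:ℝ)) * Sr N k
      = ∑ m ∈ Finset.range (k+1), ((k:ℝ) - (N:ℝ)) * (wr N m / (Nat.factorial (k-m))) := by
    rw [Sr, Finset.mul_sum]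
  have tel : ∑ m ∈ Finset.range (k+1), (tfun N k (m+1) - tfun N k m)
      = tfun N k (k+1) - tfun N k 0 := Finset.sum_range_sub (tfun N k) (k+1)
  have hsum : ∑ m ∈ Finset.range (k+1),
      (((k:ℝ)+1) * ((k:ℝ) - (2*(N:ℝ)+1)) * (wr N m / (Nat.factorial (k+1-m)))
        - ((k:ℝ) - (N:ℝ)) * (wr N m / (Nat.factorial (k-m))))
      = tfun N k (k+1) - tfun N k 0 := by
    rw [Finset.sum_congr rfl hstep, tel]
  rw [Finset.sum_sub_distrib] at hsum
  have ht0 : tfun N k 0 = 0 := by simp [tfun]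
  have htk : tfun N k (k+1)
      = -((k:ℝ)+1) * (((k:ℝ)+1) - (2*(N:ℝ)+2)) * wr N (k+1) := by
    unfold tfun
    rw [Nat.sub_self]
    push_cast
    simp [Nat.factorial_zero]
  have hlast : ((k:ℝ)+1) * ((k:ℝ) - (2*(N:ℝ)+1)) * (wr N (k+1) / (Nat.factorial (k+1-(k+1))))
      = ((k:ℝ)+1) * ((k:ℝ) - (2*(N:ℝ)+1)) * wr N (k+1) := by
    rw [Nat.sub_self]
    simp [Nat.factorial_zero]
  rw [expand1, expand2, Finset.sum_range_succ, hlast]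
  rw [ht0, htk] at hsum
  linarith [hsum]


noncomputable def rr (N k : ℕ) : ℝ := qr N k - Sr N k

lemma rr_rec (N k : ℕ) :
    ((k:ℝ)+1) * ((k:ℝ) - (2*(N:ℝ)+1)) * rr N (k+1) = ((k:ℝ) - (N:ℝ)) * rr N k := by
  unfold rr
  have h1 := qr_rec N k
  have h2 := Sr_rec N k
  linear_combination h1 - h2

lemma Sr_zero (N : ℕ) : Sr N 0 = 1 := by
  simp [Sr, wr_zero]

lemma rr_zero (N : ℕ) : rr N 0 = 0 := by
  simp [rr, Sr_zero, qr_zero]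

lemma rr_vanish (N : ℕ) : ∀ k, k ≤ 2*N+1 → rr N k = 0 := by
  intro k
  induction k with
  | zero => intro _; exact rr_zero N
  | succ k ih =>
    intro h
    have h0 : rr N k = 0 := ih (by omega)
    have hrec := rr_rec N k
    rw [h0, mul_zero] at hrec
    have hk1 : ((k:ℝ)+1) ≠ 0 := by positivity
    have hkr : (k:ℝ) < 2*(N:ℝ)+1 := by
      have : k < 2*N+1 := by omega
      exact_mod_cast this
    have hk2 : ((k:ℝ) - (2*(N:ℝ)+1)) ≠ 0 := by intro hc; linarith
    have := mul_eq_zero.mp hrec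
    rcases this with h'|h'
    · rcases mul_eq_zero.mp h' with h''|h''
      · exact absurd h'' hk1
      · exact absurd h'' hk2
    · exact h'

lemma beta_sum (M : ℕ) : ∀ a : ℕ,
    ∑ m ∈ Finset.range (M+1), (-1:ℝ)^m * (M.choose m) / ((m:ℝ) + a + 1)
      = (Nat.factorial M : ℝ) * (Nat.factorial a : ℝ) / (Nat.factorial (M + a + 1) : ℝ) := by
  induction M with
  | zero =>
    intro a
    have h2 : (Nat.factorial (a+1) : ℝ) = ((a:ℝ)+1) * (Nat.factorial a : ℝ) := by
      rw [Nat.factorial_succ]; push_cast; ring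
    have h3 : (Nat.factorial a : ℝ) ≠ 0 := by positivity
    have h4 : ((a:ℝ)+1) ≠ 0 := by positivity
    rw [Finset.sum_range_one]
    rw [show (0:ℕ) + a + 1 = a + 1 by ring, h2]
    push_cast
    rw [pow_zero, Nat.choose_self]
    push_cast
    field_simp
    simp
  | succ M ih =>
    intro a
    have hfg : ∀ i ∈ Finset.range (M+1),
        (fun m => (-1:ℝ)^m * (((M+1).choose m) : ℝ) / ((m:ℝ) + a + 1)) (i+1)
        = (fun m => (-1:ℝ)^m * ((M.choose m) : ℝ) / ((m:ℝ) + a + 1)) (i+1)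
          - (fun m => (-1:ℝ)^m * ((M.choose m) : ℝ) / ((m:ℝ) + ((a+1:ℕ):ℝ) + 1)) i := by
      intro i _
      simp only
      have hd : ((i:ℝ) + 1 + a + 1) ≠ 0 := by positivity
      rw [Nat.choose_succ_succ' M i]
      push_cast
      rw [pow_succ]
      field_simp
      ring
    have hM1 : (((M+1).choose (M+1) : ℕ) : ℝ) = ((M.choose (M+1) : ℕ) : ℝ) + (M.choose M : ℝ) := by
      rw [Nat.choose_succ_succ' M M]
      push_cast
      ring
    calc ∑ m ∈ Finset.range (M+2), (-1:ℝ)^m * (((M+1).choose m) : ℝ) / ((m:ℝ) + a + 1)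
        = (∑ i ∈ Finset.range (M+1),
            (fun m => (-1:ℝ)^m * (((M+1).choose m) : ℝ) / ((m:ℝ) + a + 1)) (i+1))
          + (fun m => (-1:ℝ)^m * (((M+1).choose m) : ℝ) / ((m:ℝ) + a + 1)) 0 :=
          Finset.sum_range_succ' _ (M+1)
      _ = (∑ i ∈ Finset.range (M+1),
            ((fun m => (-1:ℝ)^m * ((M.choose m) : ℝ) / ((m:ℝ) + a + 1)) (i+1)
              - (fun m => (-1:ℝ)^m * ((M.choose m) : ℝ) / ((m:ℝ) + ((a+1:ℕ):ℝ) + 1)) i))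
          + (fun m => (-1:ℝ)^m * ((M.choose m) : ℝ) / ((m:ℝ) + a + 1)) 0 := by
          rw [Finset.sum_congr rfl hfg]
          simp
      _ = ((∑ i ∈ Finset.range (M+1),
            (fun m => (-1:ℝ)^m * ((M.choose m) : ℝ) / ((m:ℝ) + a + 1)) (i+1))
          + (fun m => (-1:ℝ)^m * ((M.choose m) : ℝ) / ((m:ℝ) + a + 1)) 0)
          - ∑ i ∈ Finset.range (M+1),
              (-1:ℝ)^i * ((M.choose i) : ℝ) / ((i:ℝ) + ((a+1:ℕ):ℝ) + 1) := by
          rw [Finset.sum_sub_distrib]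
          ring
      _ = (∑ m ∈ Finset.range (M+2), (-1:ℝ)^m * ((M.choose m) : ℝ) / ((m:ℝ) + a + 1))
          - ∑ i ∈ Finset.range (M+1),
              (-1:ℝ)^i * ((M.choose i) : ℝ) / ((i:ℝ) + ((a+1:ℕ):ℝ) + 1) := by
          rw [Finset.sum_range_succ' (fun m => (-1:ℝ)^m * ((M.choose m) : ℝ) / ((m:ℝ) + a + 1))
            (M+1)]
      _ = (∑ m ∈ Finset.range (M+1), (-1:ℝ)^m * ((M.choose m) : ℝ) / ((m:ℝ) + a + 1))
          - ∑ i ∈ Finset.range (M+1),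
              (-1:ℝ)^i * ((M.choose i) : ℝ) / ((i:ℝ) + ((a+1:ℕ):ℝ) + 1) := by
          rw [Finset.sum_range_succ (fun m => (-1:ℝ)^m * ((M.choose m) : ℝ) / ((m:ℝ) + a + 1))
            (M+1)]
          simp [Nat.choose_succ_self]
      _ = (Nat.factorial M : ℝ) * (Nat.factorial a : ℝ) / (Nat.factorial (M + a + 1) : ℝ)
          - (Nat.factorial M : ℝ) * (Nat.factorial (a+1) : ℝ)
              / (Nat.factorial (M + (a+1) + 1) : ℝ) := by
          rw [ih a, ih (a+1)]
      _ = (Nat.factorial (M+1) : ℝ) * (Nat.factorial a : ℝ)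
            / (Nat.factorial (M + 1 + a + 1) : ℝ) := by
          have e1 : M + (a+1) + 1 = (M + a + 1) + 1 := by ring
          have e2 : M + 1 + a + 1 = (M + a + 1) + 1 := by ring
          rw [e1, e2, Nat.factorial_succ (M+a+1), Nat.factorial_succ M, Nat.factorial_succ a]
          have h1 : (Nat.factorial (M+a+1) : ℝ) ≠ 0 := by positivity
          have h2 : ((M:ℝ) + a + 1 + 1) ≠ 0 := by positivity
          have h3 : (Nat.factorial a : ℝ) ≠ 0 := by positivity
          have h4 : (Nat.factorial M : ℝ) ≠ 0 := by positivity
          push_cast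
          field_simp
          ring


lemma wr_closed (N m : ℕ) (h : m ≤ N+1) :
    wr N m = (-1:ℝ)^m * ((Nat.factorial (N+1) : ℝ) * (Nat.factorial (2*N+1-m) : ℝ))
      / ((Nat.factorial (N+1-m) : ℝ) * (Nat.factorial (2*N+1) : ℝ) * (Nat.factorial m : ℝ)) := by
  have h2 : m ≤ 2*N+1 := by omega
  rw [wr, poch_eval_neg_eq (N+1) m h, poch_eval_neg_eq (2*N+1) m h2]
  have n1 : (Nat.factorial (N+1-m) : ℝ) ≠ 0 := by positivity
  have n2 : (Nat.factorial (2*N+1) : ℝ) ≠ 0 := by positivity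
  have n3 : (Nat.factorial (2*N+1-m) : ℝ) ≠ 0 := by positivity
  have n4 : (Nat.factorial m : ℝ) ≠ 0 := by positivity
  have n5 : (Nat.factorial (N+1) : ℝ) ≠ 0 := by positivity
  have n6 : ((-1:ℝ)^m) ≠ 0 := by
    apply pow_ne_zero; norm_num
  field_simp

lemma Sr_2N2 (N : ℕ) : Sr N (2*N+2)
    = (-1:ℝ)^(N+1) * ((Nat.factorial (N+1) : ℝ) * (Nat.factorial N : ℝ))
      / ((Nat.factorial (2*N+1) : ℝ) * (Nat.factorial (2*N+2) : ℝ)) := by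
  have hrestrict : Sr N (2*N+2)
      = ∑ m ∈ Finset.range (N+2), wr N m / (Nat.factorial (2*N+2-m)) := by
    rw [Sr]
    rw [← Finset.sum_subset (Finset.range_subset_range.mpr (show N+2 ≤ 2*N+2+1 by omega))]
    intro x hx hnx
    have hx2 : N + 1 < x := by
      simp only [Finset.mem_range] at hnx
      omega
    rw [wr_eq_zero N x hx2, zero_div]
  have hterm : ∀ m ∈ Finset.range (N+2),
      wr N m / (Nat.factorial (2*N+2-m))
      = (1 / (Nat.factorial (2*N+1) : ℝ))
        * ((-1:ℝ)^m * (((N+1).choose m : ℕ) : ℝ) / (2*(N:ℝ)+2 - m)) := by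
    intro m hm
    have hm1 : m ≤ N+1 := by
      simp only [Finset.mem_range] at hm
      omega
    have hm2 : m ≤ 2*N+1 := by omega
    have e1 : 2*N+2-m = (2*N+1-m) + 1 := by omega
    have e2 : (Nat.factorial (2*N+2-m) : ℝ)
        = (2*(N:ℝ)+2-m) * (Nat.factorial (2*N+1-m) : ℝ) := by
      rw [e1, Nat.factorial_succ]
      push_cast [Nat.cast_sub hm2]
      ring
    have e3 : (((N+1).choose m : ℕ) : ℝ)
        = (Nat.factorial (N+1) : ℝ)
          / ((Nat.factorial m : ℝ) * (Nat.factorial (N+1-m) : ℝ)) := by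
      rw [Nat.cast_choose ℝ hm1]
    rw [wr_closed N m hm1, e2, e3]
    have n1 : (Nat.factorial (N+1-m) : ℝ) ≠ 0 := by positivity
    have n2 : (Nat.factorial (2*N+1) : ℝ) ≠ 0 := by positivity
    have n3 : (Nat.factorial (2*N+1-m) : ℝ) ≠ 0 := by positivity
    have n4 : (Nat.factorial m : ℝ) ≠ 0 := by positivity
    have n5 : (2*(N:ℝ)+2-m) ≠ 0 := by
      have : (m:ℝ) ≤ (N:ℝ)+1 := by exact_mod_cast hm1
      intro hc
      linarith
    field_simp
  rw [hrestrict, Finset.sum_congr rfl hterm, ← Finset.mul_sum]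
  have hreflect : ∑ m ∈ Finset.range (N+2),
      (-1:ℝ)^m * (((N+1).choose m : ℕ) : ℝ) / (2*(N:ℝ)+2 - m)
      = ∑ j ∈ Finset.range (N+2),
          (-1:ℝ)^(N+1) * ((-1:ℝ)^j * (((N+1).choose j : ℕ) : ℝ) / ((j:ℝ) + N + 1)) := by
    rw [← Finset.sum_range_reflect]
    apply Finset.sum_congr rfl
    intro j hj
    have hj1 : j ≤ N+1 := by
      simp only [Finset.mem_range] at hj
      omega
    have e4 : N + 2 - 1 - j = N + 1 - j := by omega
    rw [e4]
    have e5 : (N+1).choose (N+1-j) = (N+1).choose j := Nat.choose_symm hj1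
    rw [e5]
    have hsq : (-1:ℝ)^j * (-1:ℝ)^j = 1 := by
      rw [← pow_add]
      exact Even.neg_one_pow ⟨j, rfl⟩
    have hadd : (-1:ℝ)^(N+1-j) * (-1:ℝ)^j = (-1:ℝ)^(N+1) := by
      rw [← pow_add]
      congr 1
      omega
    have hsign : (-1:ℝ)^(N+1-j) = (-1:ℝ)^(N+1) * (-1:ℝ)^j := by
      calc (-1:ℝ)^(N+1-j) = (-1:ℝ)^(N+1-j) * ((-1:ℝ)^j * (-1:ℝ)^j) := by rw [hsq, mul_one]
        _ = ((-1:ℝ)^(N+1-j) * (-1:ℝ)^j) * (-1:ℝ)^j := by ring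
        _ = (-1:ℝ)^(N+1) * (-1:ℝ)^j := by rw [hadd]
    have e6 : ((N+1-j : ℕ) : ℝ) = (N:ℝ) + 1 - j := by
      push_cast [Nat.cast_sub hj1]
      ring
    rw [hsign, e6]
    ring
  rw [hreflect, ← Finset.mul_sum]
  have hbeta := beta_sum (N+1) N
  have hidx : N + 1 + N + 1 = 2*N+2 := by ring
  rw [hidx] at hbeta
  have hbeta' : ∑ j ∈ Finset.range (N+2),
      (-1:ℝ)^j * (((N+1).choose j : ℕ) : ℝ) / ((j:ℝ) + N + 1)
      = (Nat.factorial (N+1) : ℝ) * (Nat.factorial N : ℝ) / (Nat.factorial (2*N+2) : ℝ) := by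
    rw [← hbeta]
  rw [hbeta']
  ring

noncomputable def gr0 (N : ℕ) : ℝ :=
  (-1:ℝ)^N * ((Nat.factorial (N+1) : ℝ) * (Nat.factorial N : ℝ))
    / ((Nat.factorial (2*N+1) : ℝ) * (Nat.factorial (2*N+2) : ℝ))

noncomputable def gr1 (N : ℕ) : ℝ := gr0 N * ((N:ℝ)+2) / (2*(N:ℝ)+3)

noncomputable def gr2 (N : ℕ) : ℝ := gr1 N * ((N:ℝ)+3) / (2*(2*(N:ℝ)+4))

lemma rr_2N2 (N : ℕ) : rr N (2*N+2) = gr0 N := by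
  rw [rr, qr_eq_zero N (2*N+2) (by omega), Sr_2N2, gr0, pow_succ]
  ring

lemma rr_2N3 (N : ℕ) : rr N (2*N+3) = gr1 N := by
  have hrec := rr_rec N (2*N+2)
  have e1 : 2*N+2+1 = 2*N+3 := by ring
  rw [e1, rr_2N2] at hrec
  have e2 : ((2*N+2 : ℕ) : ℝ) = 2*(N:ℝ)+2 := by push_cast; ring
  rw [e2] at hrec
  have h3 : (2*(N:ℝ)+3) ≠ 0 := by positivity
  rw [gr1]
  have h4 : (2*(N:ℝ)+2+1) * (2*(N:ℝ)+2 - (2*(N:ℝ)+1)) = 2*(N:ℝ)+3 := by ring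
  rw [h4] at hrec
  rw [eq_div_iff h3]
  linear_combination hrec

lemma rr_2N4 (N : ℕ) : rr N (2*N+4) = gr2 N := by
  have hrec := rr_rec N (2*N+3)
  have e1 : 2*N+3+1 = 2*N+4 := by ring
  rw [e1, rr_2N3] at hrec
  have e2 : ((2*N+3 : ℕ) : ℝ) = 2*(N:ℝ)+3 := by push_cast; ring
  rw [e2] at hrec
  have h3 : (2*(2*(N:ℝ)+4)) ≠ 0 := by positivity
  rw [gr2]
  have h4 : (2*(N:ℝ)+3+1) * (2*(N:ℝ)+3 - (2*(N:ℝ)+1)) = 2*(2*(N:ℝ)+4) := by ring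
  rw [h4] at hrec
  rw [eq_div_iff h3]
  linear_combination hrec

open Complex

lemma poch_cast (m : ℕ) (x : ℝ) :
    (ascPochhammer ℂ m).eval ((x:ℝ):ℂ) = (((ascPochhammer ℝ m).eval x : ℝ) : ℂ) := by
  rw [← ascPochhammer_map (algebraMap ℝ ℂ) m, Polynomial.eval_map,
    show ((x:ℝ):ℂ) = algebraMap ℝ ℂ x from rfl, Polynomial.eval₂_at_apply]
  rfl

noncomputable def Qp (N : ℕ) : Polynomial ℂ :=
  ∑ m ∈ Finset.range (N+1), Polynomial.monomial m ((qr N m : ℝ) : ℂ)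

noncomputable def Pp (N : ℕ) : Polynomial ℂ :=
  ∑ m ∈ Finset.range (N+2), Polynomial.monomial m ((wr N m : ℝ) : ℂ)

noncomputable def Ep (N : ℕ) : Polynomial ℂ :=
  ∑ j ∈ Finset.range (2*N+5), Polynomial.monomial j ((((Nat.factorial j : ℕ) : ℂ))⁻¹)

lemma Qp_coeff (N k : ℕ) : (Qp N).coeff k = ((qr N k : ℝ) : ℂ) := by
  rw [Qp, Polynomial.finset_sum_coeff]
  simp only [Polynomial.coeff_monomial]
  rw [Finset.sum_ite_eq' (Finset.range (N+1)) k (fun m => ((qr N m : ℝ) : ℂ))]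
  by_cases h : k ∈ Finset.range (N+1)
  · rw [if_pos h]
  · rw [if_neg h]
    have : N < k := by
      simp only [Finset.mem_range] at h
      omega
    rw [qr_eq_zero N k this]
    simp

lemma Pp_coeff (N k : ℕ) : (Pp N).coeff k = ((wr N k : ℝ) : ℂ) := by
  rw [Pp, Polynomial.finset_sum_coeff]
  simp only [Polynomial.coeff_monomial]
  rw [Finset.sum_ite_eq' (Finset.range (N+2)) k (fun m => ((wr N m : ℝ) : ℂ))]
  by_cases h : k ∈ Finset.range (N+2)
  · rw [if_pos h]
  · rw [if_neg h]
    have : N + 1 < k := by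
      simp only [Finset.mem_range] at h
      omega
    rw [wr_eq_zero N k this]
    simp

lemma Ep_coeff (N k : ℕ) (h : k < 2*N+5) :
    (Ep N).coeff k = (((Nat.factorial k : ℕ) : ℂ))⁻¹ := by
  rw [Ep, Polynomial.finset_sum_coeff]
  simp only [Polynomial.coeff_monomial]
  rw [Finset.sum_ite_eq' (Finset.range (2*N+5)) k (fun j => (((Nat.factorial j : ℕ) : ℂ))⁻¹)]
  rw [if_pos (Finset.mem_range.mpr h)]


lemma EpPp_coeff (N d : ℕ) (hd : d < 2*N+5) :
    (Ep N * Pp N).coeff d = ((Sr N d : ℝ) : ℂ) := by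
  rw [Polynomial.coeff_mul, Finset.Nat.sum_antidiagonal_eq_sum_range_succ_mk]
  have hrefl := Finset.sum_range_reflect
    (fun k => (Ep N).coeff k * (Pp N).coeff (d - k)) (d+1)
  rw [← hrefl]
  rw [Sr]
  push_cast
  apply Finset.sum_congr rfl
  intro j hj
  have hjd : j ≤ d := by
    simp only [Finset.mem_range] at hj
    omega
  have e2 : d - (d - j) = j := by omega
  rw [e2]
  rw [Ep_coeff N (d-j) (by omega), Pp_coeff N j]
  push_cast
  ring

noncomputable def mainP (N : ℕ) : Polynomial ℂ :=
  Polynomial.monomial (2*N+2) ((gr0 N : ℝ) : ℂ) + Polynomial.monomial (2*N+3) ((gr1 N : ℝ) : ℂ)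
    + Polynomial.monomial (2*N+4) ((gr2 N : ℝ) : ℂ)

lemma keyDvd (N : ℕ) : (Polynomial.X)^(2*N+5) ∣ (Qp N - Ep N * Pp N - mainP N) := by
  rw [Polynomial.X_pow_dvd_iff]
  intro d hd
  rw [Polynomial.coeff_sub, Polynomial.coeff_sub, Qp_coeff, EpPp_coeff N d hd]
  rw [mainP, Polynomial.coeff_add, Polynomial.coeff_add]
  simp only [Polynomial.coeff_monomial]
  have hrr : ∀ k : ℕ, qr N k - Sr N k = rr N k := fun k => rfl
  have hcases : d ≤ 2*N+1 ∨ d = 2*N+2 ∨ d = 2*N+3 ∨ d = 2*N+4 := by omega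
  rcases hcases with h|h|h|h
  · rw [if_neg (by omega), if_neg (by omega), if_neg (by omega)]
    have hv : qr N d - Sr N d = 0 := by
      have := rr_vanish N d h
      rw [rr] at this
      linarith
    calc ((qr N d : ℝ) : ℂ) - ((Sr N d : ℝ) : ℂ) - (0 + 0 + 0)
        = ((qr N d - Sr N d : ℝ) : ℂ) := by push_cast; ring
      _ = 0 := by rw [hv]; simp
  · subst h
    rw [if_pos rfl, if_neg (by omega), if_neg (by omega)]
    have hv : qr N (2*N+2) - Sr N (2*N+2) - gr0 N = 0 := by
      have := rr_2N2 N
      rw [rr] at this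
      linarith
    calc ((qr N (2*N+2) : ℝ) : ℂ) - ((Sr N (2*N+2) : ℝ) : ℂ) - (((gr0 N : ℝ):ℂ) + 0 + 0)
        = ((qr N (2*N+2) - Sr N (2*N+2) - gr0 N : ℝ) : ℂ) := by push_cast; ring
      _ = 0 := by rw [hv]; simp
  · subst h
    rw [if_neg (by omega), if_pos rfl, if_neg (by omega)]
    have hv : qr N (2*N+3) - Sr N (2*N+3) - gr1 N = 0 := by
      have := rr_2N3 N
      rw [rr] at this
      linarith
    calc ((qr N (2*N+3) : ℝ) : ℂ) - ((Sr N (2*N+3) : ℝ) : ℂ) - ((0:ℂ) + ((gr1 N : ℝ):ℂ) + 0)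
        = ((qr N (2*N+3) - Sr N (2*N+3) - gr1 N : ℝ) : ℂ) := by push_cast; ring
      _ = 0 := by rw [hv]; simp
  · subst h
    rw [if_neg (by omega), if_neg (by omega), if_pos rfl]
    have hv : qr N (2*N+4) - Sr N (2*N+4) - gr2 N = 0 := by
      have := rr_2N4 N
      rw [rr] at this
      linarith
    calc ((qr N (2*N+4) : ℝ) : ℂ) - ((Sr N (2*N+4) : ℝ) : ℂ) - ((0:ℂ) + 0 + ((gr2 N : ℝ):ℂ))
        = ((qr N (2*N+4) - Sr N (2*N+4) - gr2 N : ℝ) : ℂ) := by push_cast; ring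
      _ = 0 := by rw [hv]; simp


open Asymptotics Filter Topology

noncomputable def zf (Ω : ℝ) : ℂ := -(Complex.I*(Ω:ℂ))

lemma norm_zf (Ω : ℝ) : ‖zf Ω‖ = |Ω| := by
  rw [zf, norm_neg, norm_mul, Complex.norm_I, one_mul, Complex.norm_real, Real.norm_eq_abs]

lemma zpow_bigO (c : ℂ) (k j : ℕ) (h : j ≤ k) :
    (fun Ω : ℝ => c * (zf Ω)^k) =O[nhds (0:ℝ)] fun Ω : ℝ => Ω^j := by
  rw [isBigO_iff]
  refine ⟨‖c‖, ?_⟩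
  filter_upwards [Metric.ball_mem_nhds (0:ℝ) one_pos] with Ω hΩ
  have h1 : |Ω| ≤ 1 := by
    rw [Metric.mem_ball, Real.dist_eq, sub_zero] at hΩ
    exact hΩ.le
  rw [norm_mul, norm_pow, norm_zf, norm_pow, Real.norm_eq_abs]
  exact mul_le_mul_of_nonneg_left (pow_le_pow_of_le_one (abs_nonneg Ω) h1 h) (norm_nonneg c)

lemma re_bigO {f : ℝ → ℂ} {g : ℝ → ℝ} {l : Filter ℝ} (h : f =O[l] g) :
    (fun x => (f x).re) =O[l] g := by
  refine IsBigO.trans ?_ h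
  rw [isBigO_iff]
  refine ⟨1, Filter.Eventually.of_forall fun x => ?_⟩
  rw [one_mul, Real.norm_eq_abs]
  exact Complex.abs_re_le_norm (f x)

lemma im_bigO {f : ℝ → ℂ} {g : ℝ → ℝ} {l : Filter ℝ} (h : f =O[l] g) :
    (fun x => (f x).im) =O[l] g := by
  refine IsBigO.trans ?_ h
  rw [isBigO_iff]
  refine ⟨1, Filter.Eventually.of_forall fun x => ?_⟩
  rw [one_mul, Real.norm_eq_abs]
  exact Complex.abs_im_le_norm (f x)

lemma exp_tail_bigO (M : ℕ) (hM : 0 < M) :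
    (fun Ω : ℝ => Complex.exp (zf Ω)
      - ∑ j ∈ Finset.range M, (zf Ω)^j / (Nat.factorial j))
      =O[nhds (0:ℝ)] fun Ω : ℝ => Ω^M := by
  rw [isBigO_iff]
  refine ⟨(M.succ : ℝ) * ((Nat.factorial M : ℝ) * M)⁻¹, ?_⟩
  filter_upwards [Metric.ball_mem_nhds (0:ℝ) one_pos] with Ω hΩ
  have h1 : |Ω| ≤ 1 := by
    rw [Metric.mem_ball, Real.dist_eq, sub_zero] at hΩ
    exact hΩ.le
  have h2 : ‖zf Ω‖ ≤ 1 := by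
    rw [norm_zf]
    exact h1
  have hb := Complex.exp_bound h2 hM
  refine le_trans hb ?_
  rw [norm_zf, norm_pow, Real.norm_eq_abs]
  ring_nf
  exact le_refl _

lemma Fm_eq (N : ℕ) (Ω : ℝ) : Fm N Ω = (Qp N).eval (zf Ω) := by
  rw [Fm, hypF, Qp, Polynomial.eval_finset_sum]
  apply Finset.sum_congr rfl
  intro m _
  rw [Polynomial.eval_monomial]
  have h1 : (-(N:ℂ)) = ((-((N:ℕ):ℝ) : ℝ) : ℂ) := by push_cast; ring
  have h2 : (-(2*(N:ℂ)+1)) = ((-(((2*N+1:ℕ)):ℝ) : ℝ) : ℂ) := by push_cast; ring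
  rw [h1, h2, poch_cast, poch_cast, qr, zf]
  push_cast
  ring

lemma Fp1_eq (N : ℕ) (Ω : ℝ) : Fp1 N Ω = (Pp N).eval (zf Ω) := by
  rw [Fp1, hypF, Pp, Polynomial.eval_finset_sum]
  apply Finset.sum_congr rfl
  intro m _
  rw [Polynomial.eval_monomial]
  have h1 : (-(N:ℂ) - 1) = ((-(((N+1:ℕ)):ℝ) : ℝ) : ℂ) := by push_cast; ring
  have h2 : (-(2*(N:ℂ)+1)) = ((-(((2*N+1:ℕ)):ℝ) : ℝ) : ℂ) := by push_cast; ring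
  rw [h1, h2, poch_cast, poch_cast, wr, zf]
  have hnp : (-(Complex.I*(Ω:ℂ)))^m = (-1:ℂ)^m * (Complex.I*(Ω:ℂ))^m := by
    rw [neg_pow]
  rw [hnp]
  have hsq : ((-1:ℂ)^m) * ((-1:ℂ)^m) = 1 := by
    rw [← pow_add]
    exact Even.neg_one_pow ⟨m, rfl⟩
  push_cast
  linear_combination (-(((((ascPochhammer ℝ m).eval (-((N:ℝ)+1)) : ℝ) : ℂ))
    / ((((ascPochhammer ℝ m).eval (-(2*(N:ℝ)+1)) : ℝ) : ℂ))
    / ((Nat.factorial m : ℕ) : ℂ) * (Complex.I*(Ω:ℂ))^m)) * hsq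

lemma Ep_eval (N : ℕ) (w : ℂ) :
    (Ep N).eval w = ∑ j ∈ Finset.range (2*N+5), w^j / (Nat.factorial j) := by
  rw [Ep, Polynomial.eval_finset_sum]
  apply Finset.sum_congr rfl
  intro j _
  rw [Polynomial.eval_monomial, div_eq_mul_inv]
  ring

lemma mainP_eval (N : ℕ) (w : ℂ) :
    (mainP N).eval w = ((gr0 N : ℝ) : ℂ) * w^(2*N+2) + ((gr1 N : ℝ) : ℂ) * w^(2*N+3)
      + ((gr2 N : ℝ) : ℂ) * w^(2*N+4) := by
  rw [mainP]
  simp [Polynomial.eval_monomial]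

noncomputable def Tp (N : ℕ) : Polynomial ℂ :=
  Polynomial.monomial 0 (1:ℂ) + Polynomial.monomial 1 ((qr N 1 : ℝ) : ℂ)
    + Polynomial.monomial 2 ((qr N 2 : ℝ) : ℂ)

lemma Tp_eval (N : ℕ) (w : ℂ) :
    (Tp N).eval w = 1 + ((qr N 1 : ℝ) : ℂ) * w + ((qr N 2 : ℝ) : ℂ) * w^2 := by
  rw [Tp]
  simp [Polynomial.eval_monomial]

lemma TpDvd (N : ℕ) : (Polynomial.X)^3 ∣ (Qp N - Tp N) := by
  rw [Polynomial.X_pow_dvd_iff]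
  intro d hd
  rw [Polynomial.coeff_sub, Qp_coeff, Tp]
  rw [Polynomial.coeff_add, Polynomial.coeff_add]
  simp only [Polynomial.coeff_monomial]
  interval_cases d
  · rw [if_pos rfl, if_neg (by omega), if_neg (by omega), qr_zero]
    norm_num
  · rw [if_neg (by omega), if_pos rfl, if_neg (by omega)]
    norm_num
  · rw [if_neg (by omega), if_neg (by omega), if_pos rfl]
    norm_num

lemma zf_cont : Continuous zf := by
  unfold zf
  exact (continuous_const.mul Complex.continuous_ofReal).neg

lemma Fm_cont (N : ℕ) : Continuous (Fm N) := by
  have h : Fm N = fun Ω => (Qp N).eval (zf Ω) := funext (Fm_eq N)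
  rw [h]
  exact (Qp N).continuous.comp zf_cont

lemma Fm_zero (N : ℕ) : Fm N 0 = 1 := by
  rw [Fm_eq]
  have h : zf 0 = 0 := by simp [zf]
  rw [h, ← Polynomial.coeff_zero_eq_eval_zero, Qp_coeff, qr_zero]
  simp

lemma padeE_MT (N : ℕ) :
    (fun Ω : ℝ => padeE N Ω
      - (((gr0 N : ℝ) : ℂ) * (zf Ω)^(2*N+2)
        + (((gr1 N : ℝ) : ℂ) - ((gr0 N : ℝ) : ℂ) * ((qr N 1 : ℝ) : ℂ)) * (zf Ω)^(2*N+3)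
        + (((gr2 N : ℝ) : ℂ) - ((gr1 N : ℝ) : ℂ) * ((qr N 1 : ℝ) : ℂ)
            + ((gr0 N : ℝ) : ℂ) * (((qr N 1 : ℝ) : ℂ)^2 - ((qr N 2 : ℝ) : ℂ)))
          * (zf Ω)^(2*N+4)))
      =O[nhds (0:ℝ)] fun Ω : ℝ => Ω^(2*N+5) := by
  set B : ℂ := ((qr N 1 : ℝ) : ℂ) with hB
  set C : ℂ := ((qr N 2 : ℝ) : ℂ) with hC
  set g0 : ℂ := ((gr0 N : ℝ) : ℂ) with hg0
  set g1 : ℂ := ((gr1 N : ℝ) : ℂ) with hg1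
  set g2 : ℂ := ((gr2 N : ℝ) : ℂ) with hg2
  obtain ⟨gq, hgq⟩ := keyDvd N
  obtain ⟨gt, hgt⟩ := TpDvd N
  have hNumEval : ∀ Ω : ℝ, Fm N Ω - (Ep N).eval (zf Ω) * Fp1 N Ω - (mainP N).eval (zf Ω)
      = (zf Ω)^(2*N+5) * gq.eval (zf Ω) := by
    intro Ω
    rw [Fm_eq, Fp1_eq]
    have h := congrArg (Polynomial.eval (zf Ω)) hgq
    simpa [Polynomial.eval_sub, Polynomial.eval_mul, Polynomial.eval_pow] using h
  have hgqO : (fun Ω : ℝ => gq.eval (zf Ω)) =O[nhds (0:ℝ)] (fun _ : ℝ => (1:ℝ)) :=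
    ((gq.continuous.comp zf_cont).tendsto 0).isBigO_one (F := ℝ)
  have hzO : (fun Ω : ℝ => (zf Ω)^(2*N+5)) =O[nhds (0:ℝ)] fun Ω : ℝ => Ω^(2*N+5) := by
    have h := zpow_bigO 1 (2*N+5) (2*N+5) le_rfl
    exact h.congr (fun Ω => one_mul _) (fun Ω => rfl)
  have hNumO : (fun Ω : ℝ => Fm N Ω - (Ep N).eval (zf Ω) * Fp1 N Ω - (mainP N).eval (zf Ω))
      =O[nhds (0:ℝ)] fun Ω : ℝ => Ω^(2*N+5) :=
    ((hzO.mul hgqO).congr (fun Ω => (hNumEval Ω).symm) (fun Ω => mul_one _))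
  have hPp1O : (fun Ω : ℝ => Fp1 N Ω) =O[nhds (0:ℝ)] (fun _ : ℝ => (1:ℝ)) := by
    have h : (fun Ω : ℝ => Fp1 N Ω) = fun Ω => (Pp N).eval (zf Ω) := funext (Fp1_eq N)
    rw [h]
    exact (((Pp N).continuous.comp zf_cont).tendsto 0).isBigO_one (F := ℝ)
  have hExpO : (fun Ω : ℝ => Complex.exp (zf Ω) - (Ep N).eval (zf Ω))
      =O[nhds (0:ℝ)] fun Ω : ℝ => Ω^(2*N+5) := by
    have h := exp_tail_bigO (2*N+5) (by omega)
    exact h.congr (fun Ω => by rw [Ep_eval]) (fun Ω => rfl)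
  have hNum2 : (fun Ω : ℝ => Fm N Ω - Complex.exp (zf Ω) * Fp1 N Ω - (mainP N).eval (zf Ω))
      =O[nhds (0:ℝ)] fun Ω : ℝ => Ω^(2*N+5) := by
    have h2 := (hExpO.mul hPp1O).congr (fun x : ℝ => rfl) (fun x : ℝ => mul_one _)
    exact (hNumO.sub h2).congr (fun Ω => by ring) (fun Ω => rfl)
  have hFmten : Filter.Tendsto (Fm N) (nhds (0:ℝ)) (nhds (1:ℂ)) := by
    have h := (Fm_cont N).tendsto 0
    rwa [Fm_zero] at h
  have hFmne : ∀ᶠ Ω in nhds (0:ℝ), Fm N Ω ≠ 0 := hFmten.eventually_ne one_ne_zero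
  have hInvO : (fun Ω : ℝ => (Fm N Ω)⁻¹) =O[nhds (0:ℝ)] (fun _ : ℝ => (1:ℝ)) := by
    have h : Filter.Tendsto (fun Ω : ℝ => (Fm N Ω)⁻¹) (nhds (0:ℝ)) (nhds ((1:ℂ)⁻¹)) :=
      hFmten.inv₀ one_ne_zero
    exact h.isBigO_one (F := ℝ)
  have hTrEval : ∀ Ω : ℝ, Fm N Ω - (1 + B * zf Ω + C * (zf Ω)^2)
      = (zf Ω)^3 * gt.eval (zf Ω) := by
    intro Ω
    rw [Fm_eq, show (1 + B * zf Ω + C * (zf Ω)^2 : ℂ) = (Tp N).eval (zf Ω) from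
      (Tp_eval N (zf Ω)).symm]
    have h := congrArg (Polynomial.eval (zf Ω)) hgt
    simpa [Polynomial.eval_sub, Polynomial.eval_mul, Polynomial.eval_pow] using h
  have hFm3 : (fun Ω : ℝ => Fm N Ω - (1 + B * zf Ω + C * (zf Ω)^2))
      =O[nhds (0:ℝ)] fun Ω : ℝ => Ω^3 := by
    have hz3 : (fun Ω : ℝ => (zf Ω)^3) =O[nhds (0:ℝ)] fun Ω : ℝ => Ω^3 := by
      have h := zpow_bigO 1 3 3 le_rfl
      exact h.congr (fun Ω => one_mul _) (fun Ω => rfl)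
    have hgtO : (fun Ω : ℝ => gt.eval (zf Ω)) =O[nhds (0:ℝ)] (fun _ : ℝ => (1:ℝ)) :=
      ((gt.continuous.comp zf_cont).tendsto 0).isBigO_one (F := ℝ)
    exact ((hz3.mul hgtO).congr (fun Ω => (hTrEval Ω).symm) (fun Ω => mul_one _))
  set W : ℝ → ℂ := fun Ω => 1 - B * zf Ω + (B^2 - C) * (zf Ω)^2 with hW
  have hWO : W =O[nhds (0:ℝ)] (fun _ : ℝ => (1:ℝ)) := by
    have hWc : Continuous W := by
      rw [hW]
      apply Continuous.add
      apply Continuous.sub continuous_const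
      exact continuous_const.mul zf_cont
      exact continuous_const.mul (zf_cont.pow 2)
    exact (hWc.tendsto 0).isBigO_one (F := ℝ)
  have hOneWF : (fun Ω : ℝ => 1 - W Ω * Fm N Ω) =O[nhds (0:ℝ)] fun Ω : ℝ => Ω^3 := by
    have hid : ∀ Ω : ℝ, 1 - W Ω * Fm N Ω
        = (-(B^3 - 2*B*C)) * (zf Ω)^3 + (-((B^2 - C)*C)) * (zf Ω)^4
          - W Ω * (Fm N Ω - (1 + B * zf Ω + C * (zf Ω)^2)) := by
      intro Ω
      rw [hW]
      simp only
      ring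
    have h1 := zpow_bigO (-(B^3 - 2*B*C)) 3 3 le_rfl
    have h2 := zpow_bigO (-((B^2 - C)*C)) 4 3 (by omega)
    have h3 := (hWO.mul hFm3).congr (fun x : ℝ => rfl) (fun x : ℝ => one_mul _)
    exact ((h1.add h2).sub h3).congr (fun Ω => (hid Ω).symm) (fun Ω => rfl)
  have hInvW : (fun Ω : ℝ => (Fm N Ω)⁻¹ - W Ω) =O[nhds (0:ℝ)] fun Ω : ℝ => Ω^3 := by
    have hev : (fun Ω : ℝ => (1 - W Ω * Fm N Ω) * (Fm N Ω)⁻¹)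
        =ᶠ[nhds (0:ℝ)] fun Ω : ℝ => (Fm N Ω)⁻¹ - W Ω := by
      filter_upwards [hFmne] with Ω h
      field_simp
    have h := (hOneWF.mul hInvO).congr (fun x : ℝ => rfl) (fun x : ℝ => mul_one _)
    exact IsBigO.congr' h hev EventuallyEq.rfl
  have hpade : (fun Ω : ℝ => (Fm N Ω - Complex.exp (zf Ω) * Fp1 N Ω) * (Fm N Ω)⁻¹)
      =ᶠ[nhds (0:ℝ)] padeE N := by
    filter_upwards [hFmne] with Ω h
    rw [padeE]
    have hz : -(Complex.I*(Ω:ℂ)) = zf Ω := rfl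
    rw [hz]
    field_simp
  set NM : ℝ → ℂ := fun Ω => (mainP N).eval (zf Ω) with hNM
  set MT : ℝ → ℂ := fun Ω => g0 * (zf Ω)^(2*N+2) + (g1 - g0*B) * (zf Ω)^(2*N+3)
    + (g2 - g1*B + g0*(B^2 - C)) * (zf Ω)^(2*N+4) with hMT
  have hdecomp : ∀ Ω : ℝ, (Fm N Ω - Complex.exp (zf Ω) * Fp1 N Ω) * (Fm N Ω)⁻¹ - MT Ω
      = (Fm N Ω - Complex.exp (zf Ω) * Fp1 N Ω - NM Ω) * (Fm N Ω)⁻¹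
        + NM Ω * ((Fm N Ω)⁻¹ - W Ω)
        + (NM Ω * W Ω - MT Ω) := by
    intro Ω
    ring
  have hNMO : NM =O[nhds (0:ℝ)] fun Ω : ℝ => Ω^(2*N+2) := by
    have h1 := zpow_bigO g0 (2*N+2) (2*N+2) le_rfl
    have h2 := zpow_bigO g1 (2*N+3) (2*N+2) (by omega)
    have h3 := zpow_bigO g2 (2*N+4) (2*N+2) (by omega)
    have h := (h1.add h2).add h3
    refine h.congr (fun Ω => ?_) (fun Ω => by ring)
    rw [hNM]
    simp only
    rw [mainP_eval]
  have hNMWMT : (fun Ω : ℝ => NM Ω * W Ω - MT Ω) =O[nhds (0:ℝ)] fun Ω : ℝ => Ω^(2*N+5) := by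
    have hid : ∀ Ω : ℝ, NM Ω * W Ω - MT Ω
        = (g1*(B^2 - C) - g2*B) * (zf Ω)^(2*N+5)
          + (g2*(B^2 - C)) * (zf Ω)^(2*N+6) := by
      intro Ω
      rw [hNM]
      simp only
      rw [mainP_eval, hW, hMT]
      ring
    have h1 := zpow_bigO (g1*(B^2 - C) - g2*B) (2*N+5) (2*N+5) le_rfl
    have h2 := zpow_bigO (g2*(B^2 - C)) (2*N+6) (2*N+5) (by omega)
    exact (h1.add h2).congr (fun Ω => (hid Ω).symm) (fun Ω => rfl)
  have hT1 := (hNum2.mul hInvO).congr (fun x : ℝ => rfl) (fun x : ℝ => mul_one _)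
  have hT2 : (fun Ω : ℝ => NM Ω * ((Fm N Ω)⁻¹ - W Ω)) =O[nhds (0:ℝ)]
      fun Ω : ℝ => Ω^(2*N+5) := by
    have h := hNMO.mul hInvW
    exact h.congr (fun x : ℝ => rfl) (fun x : ℝ => by rw [← pow_add])
  have hfinal := ((hT1.add hT2).add hNMWMT).congr (fun Ω => (hdecomp Ω).symm) (fun Ω => rfl)
  have hev2 : (fun Ω : ℝ => (Fm N Ω - Complex.exp (zf Ω) * Fp1 N Ω) * (Fm N Ω)⁻¹ - MT Ω)
      =ᶠ[nhds (0:ℝ)] fun Ω : ℝ => padeE N Ω - MT Ω := hpade.sub (EventuallyEq.refl _ MT)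
  exact IsBigO.congr' hfinal hev2 EventuallyEq.rfl

lemma rpow_bigO (a b : ℕ) (h : b ≤ a) :
    (fun Ω : ℝ => Ω^a) =O[nhds (0:ℝ)] fun Ω : ℝ => Ω^b := by
  rw [isBigO_iff]
  refine ⟨1, ?_⟩
  filter_upwards [Metric.ball_mem_nhds (0:ℝ) one_pos] with Ω hΩ
  have h1 : |Ω| ≤ 1 := by
    rw [Metric.mem_ball, Real.dist_eq, sub_zero] at hΩ
    exact hΩ.le
  rw [one_mul, Real.norm_eq_abs, Real.norm_eq_abs, _root_.abs_pow, _root_.abs_pow]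
  exact pow_le_pow_of_le_one (abs_nonneg Ω) h1 h

lemma zf_sq (Ω : ℝ) : (zf Ω)^2 = -((Ω:ℂ)^2) := by
  rw [zf]
  linear_combination ((Ω:ℂ)^2) * Complex.I_sq

lemma zf_pow_even (k : ℕ) (Ω : ℝ) : (zf Ω)^(2*k) = (-1:ℂ)^k * (Ω:ℂ)^(2*k) := by
  rw [pow_mul, zf_sq, neg_pow, ← pow_mul]

lemma zf2N2 (N : ℕ) (Ω : ℝ) : (zf Ω)^(2*N+2) = (-1:ℂ)^(N+1) * (Ω:ℂ)^(2*N+2) := by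
  rw [show 2*N+2 = 2*(N+1) by ring, zf_pow_even]

lemma zf2N3 (N : ℕ) (Ω : ℝ) : (zf Ω)^(2*N+3) = (-1:ℂ)^N * Complex.I * (Ω:ℂ)^(2*N+3) := by
  rw [show 2*N+3 = 2*(N+1)+1 by ring, pow_succ, zf_pow_even, zf]
  ring

lemma zf2N4 (N : ℕ) (Ω : ℝ) : (zf Ω)^(2*N+4) = (-1:ℂ)^N * (Ω:ℂ)^(2*N+4) := by
  rw [show 2*N+4 = 2*(N+2) by ring, zf_pow_even]
  rw [show ((-1:ℂ))^(N+2) = (-1:ℂ)^N by rw [pow_add]; norm_num]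

lemma neg_one_mul_neg_one_even (N : ℕ) : (-1:ℝ)^N * (-1:ℝ)^N = 1 := by
  rw [← pow_add]
  exact Even.neg_one_pow ⟨N, rfl⟩

lemma neg_one_mul_neg_one_odd (N : ℕ) : (-1:ℝ)^(N+1) * (-1:ℝ)^N = -1 := by
  rw [← pow_add]
  exact Odd.neg_one_pow ⟨N, by ring⟩

lemma idA (N : ℕ) : (-1:ℝ)^(N+1) * gr0 N
    = -(1/2) * ((Nat.factorial N : ℝ) / (Nat.factorial (2*N+1) : ℝ))^2 := by
  rw [gr0]
  have e1 : ((Nat.factorial (N+1) : ℕ) : ℝ) = ((N:ℝ)+1) * (Nat.factorial N : ℝ) := by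
    rw [Nat.factorial_succ]; push_cast; ring
  have e2 : ((Nat.factorial (2*N+2) : ℕ) : ℝ)
      = (2*(N:ℝ)+2) * (Nat.factorial (2*N+1) : ℝ) := by
    rw [show 2*N+2 = (2*N+1)+1 by ring, Nat.factorial_succ]; push_cast; ring
  have n1 : (Nat.factorial (2*N+1) : ℝ) ≠ 0 := by positivity
  have n2 : (Nat.factorial N : ℝ) ≠ 0 := by positivity
  have n3 : (2*(N:ℝ)+2) ≠ 0 := by positivity
  rw [e1, e2]
  rcases Nat.even_or_odd N with he|ho
  · have h1 : (-1:ℝ)^N = 1 := he.neg_one_pow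
    have h2 : (-1:ℝ)^(N+1) = -1 := (he.add_one).neg_one_pow
    rw [h1, h2]
    field_simp
  · have h1 : (-1:ℝ)^N = -1 := ho.neg_one_pow
    have h2 : (-1:ℝ)^(N+1) = 1 := (ho.add_one).neg_one_pow
    rw [h1, h2]
    field_simp

lemma idB (N : ℕ) : (-1:ℝ)^N * (gr1 N - gr0 N * qr N 1)
    = ((N:ℝ)+1) / ((2*(N:ℝ)+1) * (2*(N:ℝ)+3))
      * ((Nat.factorial N : ℝ) / (Nat.factorial (2*N+1) : ℝ))^2 := by
  rw [gr1, qr_one, gr0]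
  have e1 : ((Nat.factorial (N+1) : ℕ) : ℝ) = ((N:ℝ)+1) * (Nat.factorial N : ℝ) := by
    rw [Nat.factorial_succ]; push_cast; ring
  have e2 : ((Nat.factorial (2*N+2) : ℕ) : ℝ)
      = (2*(N:ℝ)+2) * (Nat.factorial (2*N+1) : ℝ) := by
    rw [show 2*N+2 = (2*N+1)+1 by ring, Nat.factorial_succ]; push_cast; ring
  have n1 : (Nat.factorial (2*N+1) : ℝ) ≠ 0 := by positivity
  have n2 : (Nat.factorial N : ℝ) ≠ 0 := by positivity
  have n3 : (2*(N:ℝ)+2) ≠ 0 := by positivity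
  have n4 : (2*(N:ℝ)+1) ≠ 0 := by positivity
  have n5 : (2*(N:ℝ)+3) ≠ 0 := by positivity
  rw [e1, e2]
  rcases Nat.even_or_odd N with he|ho
  · rw [he.neg_one_pow]
    field_simp
    ring
  · rw [ho.neg_one_pow]
    field_simp
    ring

end PadeAux


/-- as `Ω → 0`,
`Re(E_N) = -(Ω^{2N+2}/2)[N!/(2N+1)!]² + O(Ω^{2N+4})` and
`Im(E_N) = Ω^{2N+3}(N+1)/((2N+1)(2N+3))·[N!/(2N+1)!]² + O(Ω^{2N+5})`. -/
theorem padeE_re_im_expansion (N : ℕ) :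
    ((fun Ω : ℝ => (padeE N Ω).re
        - (-(Ω ^ (2 * N + 2) / 2)
            * ((Nat.factorial N : ℝ) / (Nat.factorial (2 * N + 1))) ^ 2))
      =O[𝓝 0] fun Ω : ℝ => Ω ^ (2 * N + 4)) ∧
    ((fun Ω : ℝ => (padeE N Ω).im
        - (Ω ^ (2 * N + 3) * ((N : ℝ) + 1) / ((2 * (N : ℝ) + 1) * (2 * (N : ℝ) + 3))
            * ((Nat.factorial N : ℝ) / (Nat.factorial (2 * N + 1))) ^ 2))
      =O[𝓝 0] fun Ω : ℝ => Ω ^ (2 * N + 5)) := by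
  have hMT := PadeAux.padeE_MT N
  have hval : ∀ Ω : ℝ,
      (((PadeAux.gr0 N : ℝ) : ℂ) * (PadeAux.zf Ω)^(2*N+2)
        + (((PadeAux.gr1 N : ℝ) : ℂ) - ((PadeAux.gr0 N : ℝ) : ℂ) * ((PadeAux.qr N 1 : ℝ) : ℂ))
            * (PadeAux.zf Ω)^(2*N+3)
        + (((PadeAux.gr2 N : ℝ) : ℂ) - ((PadeAux.gr1 N : ℝ) : ℂ) * ((PadeAux.qr N 1 : ℝ) : ℂ)
            + ((PadeAux.gr0 N : ℝ) : ℂ)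
              * (((PadeAux.qr N 1 : ℝ) : ℂ)^2 - ((PadeAux.qr N 2 : ℝ) : ℂ)))
          * (PadeAux.zf Ω)^(2*N+4))
      = ((((-1:ℝ)^(N+1) * PadeAux.gr0 N * Ω^(2*N+2)
            + (-1:ℝ)^N * (PadeAux.gr2 N - PadeAux.gr1 N * PadeAux.qr N 1
                + PadeAux.gr0 N * ((PadeAux.qr N 1)^2 - PadeAux.qr N 2)) * Ω^(2*N+4) : ℝ)) : ℂ)
        + ((((-1:ℝ)^N * (PadeAux.gr1 N - PadeAux.gr0 N * PadeAux.qr N 1) * Ω^(2*N+3) : ℝ)) : ℂ)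
          * Complex.I := by
    intro Ω
    rw [PadeAux.zf2N2, PadeAux.zf2N3, PadeAux.zf2N4]
    push_cast
    ring
  constructor
  · have hre : (fun Ω : ℝ => (padeE N Ω).re
        - ((-1:ℝ)^(N+1) * PadeAux.gr0 N * Ω^(2*N+2)
            + (-1:ℝ)^N * (PadeAux.gr2 N - PadeAux.gr1 N * PadeAux.qr N 1
                + PadeAux.gr0 N * ((PadeAux.qr N 1)^2 - PadeAux.qr N 2)) * Ω^(2*N+4)))
        =O[𝓝 0] fun Ω : ℝ => Ω^(2*N+5) := by
      have h := PadeAux.re_bigO hMT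
      refine h.congr (fun Ω => ?_) (fun Ω => rfl)
      rw [Complex.sub_re, hval Ω]
      simp only [Complex.add_re, Complex.ofReal_re, Complex.mul_re, Complex.I_re,
        Complex.I_im, Complex.ofReal_im]
      ring
    have hfuneq : (fun Ω : ℝ => (padeE N Ω).re
        - (-(Ω ^ (2 * N + 2) / 2)
            * ((Nat.factorial N : ℝ) / (Nat.factorial (2 * N + 1))) ^ 2))
        = fun Ω : ℝ => ((padeE N Ω).re
            - ((-1:ℝ)^(N+1) * PadeAux.gr0 N * Ω^(2*N+2)
              + (-1:ℝ)^N * (PadeAux.gr2 N - PadeAux.gr1 N * PadeAux.qr N 1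
                  + PadeAux.gr0 N * ((PadeAux.qr N 1)^2 - PadeAux.qr N 2)) * Ω^(2*N+4)))
          + ((-1:ℝ)^N * (PadeAux.gr2 N - PadeAux.gr1 N * PadeAux.qr N 1
              + PadeAux.gr0 N * ((PadeAux.qr N 1)^2 - PadeAux.qr N 2))) * Ω^(2*N+4) := by
      funext Ω
      linear_combination (Ω^(2*N+2)) * PadeAux.idA N
    rw [hfuneq]
    apply IsBigO.add
    · exact hre.trans (PadeAux.rpow_bigO (2*N+5) (2*N+4) (by omega))
    · exact (isBigO_refl (fun Ω : ℝ => Ω^(2*N+4)) _).const_mul_left _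
  · have him : (fun Ω : ℝ => (padeE N Ω).im
        - ((-1:ℝ)^N * (PadeAux.gr1 N - PadeAux.gr0 N * PadeAux.qr N 1) * Ω^(2*N+3)))
        =O[𝓝 0] fun Ω : ℝ => Ω^(2*N+5) := by
      have h := PadeAux.im_bigO hMT
      refine h.congr (fun Ω => ?_) (fun Ω => rfl)
      rw [Complex.sub_im, hval Ω]
      simp only [Complex.add_im, Complex.ofReal_im, Complex.mul_im, Complex.I_re,
        Complex.I_im, Complex.ofReal_re]
      ring
    have hfuneq2 : (fun Ω : ℝ => (padeE N Ω).im
        - (Ω ^ (2 * N + 3) * ((N : ℝ) + 1) / ((2 * (N : ℝ) + 1) * (2 * (N : ℝ) + 3))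
            * ((Nat.factorial N : ℝ) / (Nat.factorial (2 * N + 1))) ^ 2))
        = fun Ω : ℝ => (padeE N Ω).im
            - ((-1:ℝ)^N * (PadeAux.gr1 N - PadeAux.gr0 N * PadeAux.qr N 1) * Ω^(2*N+3)) := by
      funext Ω
      linear_combination (Ω^(2*N+3)) * PadeAux.idB N
    rw [hfuneq2]
    exact him
end

section
/- For any integer N ≥ 1 and real Ω, the ratio Im((F_N^-)²e^{iΩ})/Re((F_N^-)²e^{iΩ}) has the small-Ω expansion Ω/(2N+1) · (1 + (N/(2N-1))·(Ω/(2N+1))² + O(Ω⁴)). -/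
open Complex Finset Filter Asymptotics
open scoped Topology

/-- `H_N = (F_N^-(Ω))² e^{iΩ}`. -/
noncomputable def Hq (N : ℕ) (Ω : ℝ) : ℂ := (Fm N Ω) ^ 2 * Complex.exp (I * Ω)

section Aux

lemma asc1_eval (x : ℂ) : (ascPochhammer ℂ 1).eval x = x := by
  simp [ascPochhammer_one]

lemma asc2_eval (x : ℂ) : (ascPochhammer ℂ 2).eval x = x * (x + 1) := by
  rw [show (2:ℕ) = 1 + 1 from rfl, ascPochhammer_succ_eval, asc1_eval]; norm_num

lemma asc3_eval (x : ℂ) : (ascPochhammer ℂ 3).eval x = x * (x + 1) * (x + 2) := by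
  rw [show (3:ℕ) = 2 + 1 from rfl, ascPochhammer_succ_eval, asc2_eval]; norm_num

lemma asc4_eval (x : ℂ) : (ascPochhammer ℂ 4).eval x = x * (x + 1) * (x + 2) * (x + 3) := by
  rw [show (4:ℕ) = 3 + 1 from rfl, ascPochhammer_succ_eval, asc3_eval]; norm_num

noncomputable def Uf (e1 e2 e3 e4 : ℝ) (Ω : ℝ) : ℝ :=
  1 + (-e1^2 - e2 + 2*e1 - 1/2)*Ω^2
    + (e2^2/4 + e1*e3/3 + e4/12 - e1*e2 - e3/3 + e1^2/2 + e2/2 - e1/3 + 1/24)*Ω^4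

noncomputable def Vf (e1 e2 e3 e4 : ℝ) (Ω : ℝ) : ℝ :=
  (1 - 2*e1)*Ω + (e1*e2 + e3/3 - e1^2 - e2 + e1 - 1/6)*Ω^3

noncomputable def Wf (e1 e2 e3 e4 : ℝ) (Ω : ℝ) : ℂ :=
  (-1/24 : ℂ) * (Ω:ℂ) * (e4:ℂ)
      + (1/18 : ℂ) * (Ω:ℂ) * (e3:ℂ)
      + (-1/36 : ℂ) * (Ω:ℂ) * (e3:ℂ)^2
      + (-1/24 : ℂ) * (Ω:ℂ) * (e2:ℂ)
      + (-1/24 : ℂ) * (Ω:ℂ) * (e2:ℂ) * (e4:ℂ)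
      + (1/6 : ℂ) * (Ω:ℂ) * (e2:ℂ) * (e3:ℂ)
      + (-1/8 : ℂ) * (Ω:ℂ) * (e2:ℂ)^2
      + (1/12 : ℂ) * (Ω:ℂ) * (e1:ℂ) * (e4:ℂ)
      + (-1/6 : ℂ) * (Ω:ℂ) * (e1:ℂ) * (e3:ℂ)
      + (1/6 : ℂ) * (Ω:ℂ) * (e1:ℂ) * (e2:ℂ)
      + (-1/24 : ℂ) * (Ω:ℂ) * (e1:ℂ)^2
      + (1/288 : ℂ) * (Ω:ℂ)^3 * (e4:ℂ)
      + (1/576 : ℂ) * (Ω:ℂ)^3 * (e4:ℂ)^2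
      + (-1/72 : ℂ) * (Ω:ℂ)^3 * (e3:ℂ) * (e4:ℂ)
      + (1/72 : ℂ) * (Ω:ℂ)^3 * (e3:ℂ)^2
      + (1/48 : ℂ) * (Ω:ℂ)^3 * (e2:ℂ) * (e4:ℂ)
      + (-1/36 : ℂ) * (Ω:ℂ)^3 * (e2:ℂ) * (e3:ℂ)
      + (1/96 : ℂ) * (Ω:ℂ)^3 * (e2:ℂ)^2
      + (-1/72 : ℂ) * (Ω:ℂ)^3 * (e1:ℂ) * (e4:ℂ)
      + (1/72 : ℂ) * (Ω:ℂ)^3 * (e1:ℂ) * (e3:ℂ)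
      + (-1/1152 : ℂ) * (Ω:ℂ)^5 * (e4:ℂ)^2
      + (1/432 : ℂ) * (Ω:ℂ)^5 * (e3:ℂ) * (e4:ℂ)
      + (-1/864 : ℂ) * (Ω:ℂ)^5 * (e3:ℂ)^2
      + (-1/576 : ℂ) * (Ω:ℂ)^5 * (e2:ℂ) * (e4:ℂ)
      + (1/13824 : ℂ) * (Ω:ℂ)^7 * (e4:ℂ)^2
      + (1/12 : ℂ) * Complex.I * (e4:ℂ)
      + (-1/6 : ℂ) * Complex.I * (e3:ℂ)
      + (1/6 : ℂ) * Complex.I * (e2:ℂ)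
      + (-1/6 : ℂ) * Complex.I * (e2:ℂ) * (e3:ℂ)
      + (1/4 : ℂ) * Complex.I * (e2:ℂ)^2
      + (-1/12 : ℂ) * Complex.I * (e1:ℂ)
      + (-1/12 : ℂ) * Complex.I * (e1:ℂ) * (e4:ℂ)
      + (1/3 : ℂ) * Complex.I * (e1:ℂ) * (e3:ℂ)
      + (-1/2 : ℂ) * Complex.I * (e1:ℂ) * (e2:ℂ)
      + (1/6 : ℂ) * Complex.I * (e1:ℂ)^2
      + (-1/72 : ℂ) * Complex.I * (Ω:ℂ)^2 * (e4:ℂ)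
      + (1/72 : ℂ) * Complex.I * (Ω:ℂ)^2 * (e3:ℂ)
      + (1/72 : ℂ) * Complex.I * (Ω:ℂ)^2 * (e3:ℂ) * (e4:ℂ)
      + (-1/36 : ℂ) * Complex.I * (Ω:ℂ)^2 * (e3:ℂ)^2
      + (-1/24 : ℂ) * Complex.I * (Ω:ℂ)^2 * (e2:ℂ) * (e4:ℂ)
      + (1/12 : ℂ) * Complex.I * (Ω:ℂ)^2 * (e2:ℂ) * (e3:ℂ)
      + (-1/24 : ℂ) * Complex.I * (Ω:ℂ)^2 * (e2:ℂ)^2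
      + (1/24 : ℂ) * Complex.I * (Ω:ℂ)^2 * (e1:ℂ) * (e4:ℂ)
      + (-1/18 : ℂ) * Complex.I * (Ω:ℂ)^2 * (e1:ℂ) * (e3:ℂ)
      + (1/24 : ℂ) * Complex.I * (Ω:ℂ)^2 * (e1:ℂ) * (e2:ℂ)
      + (1/576 : ℂ) * Complex.I * (Ω:ℂ)^4 * (e4:ℂ)^2
      + (-1/144 : ℂ) * Complex.I * (Ω:ℂ)^4 * (e3:ℂ) * (e4:ℂ)
      + (1/216 : ℂ) * Complex.I * (Ω:ℂ)^4 * (e3:ℂ)^2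
      + (1/144 : ℂ) * Complex.I * (Ω:ℂ)^4 * (e2:ℂ) * (e4:ℂ)
      + (-1/144 : ℂ) * Complex.I * (Ω:ℂ)^4 * (e2:ℂ) * (e3:ℂ)
      + (-1/288 : ℂ) * Complex.I * (Ω:ℂ)^4 * (e1:ℂ) * (e4:ℂ)
      + (-1/3456 : ℂ) * Complex.I * (Ω:ℂ)^6 * (e4:ℂ)^2
      + (1/1728 : ℂ) * Complex.I * (Ω:ℂ)^6 * (e3:ℂ) * (e4:ℂ)

lemma core_id (Ω e1 e2 e3 e4 : ℝ) :
    ((1:ℂ) + (e1:ℂ)*(-(Complex.I*(Ω:ℂ))) + (e2:ℂ)*(-(Complex.I*(Ω:ℂ)))^2/2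
        + (e3:ℂ)*(-(Complex.I*(Ω:ℂ)))^3/6 + (e4:ℂ)*(-(Complex.I*(Ω:ℂ)))^4/24)^2
      * ((1:ℂ) + (Complex.I*(Ω:ℂ)) + (Complex.I*(Ω:ℂ))^2/2 + (Complex.I*(Ω:ℂ))^3/6
        + (Complex.I*(Ω:ℂ))^4/24)
    = ((Uf e1 e2 e3 e4 Ω : ℝ) : ℂ) + Complex.I * ((Vf e1 e2 e3 e4 Ω : ℝ) : ℂ)
        + ((Ω:ℂ))^5 * Wf e1 e2 e3 e4 Ω := by
  unfold Uf Vf Wf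
  push_cast
  linear_combination ((1/2 : ℂ) * (Ω:ℂ)^2
      + (1 : ℂ) * (Ω:ℂ)^2 * (e2:ℂ)
      + (-2 : ℂ) * (Ω:ℂ)^2 * (e1:ℂ)
      + (1 : ℂ) * (Ω:ℂ)^2 * (e1:ℂ)^2
      + (-1/24 : ℂ) * (Ω:ℂ)^4
      + (-1/12 : ℂ) * (Ω:ℂ)^4 * (e4:ℂ)
      + (1/3 : ℂ) * (Ω:ℂ)^4 * (e3:ℂ)
      + (-1/2 : ℂ) * (Ω:ℂ)^4 * (e2:ℂ)
      + (-1/4 : ℂ) * (Ω:ℂ)^4 * (e2:ℂ)^2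
      + (1/3 : ℂ) * (Ω:ℂ)^4 * (e1:ℂ)
      + (-1/3 : ℂ) * (Ω:ℂ)^4 * (e1:ℂ) * (e3:ℂ)
      + (1 : ℂ) * (Ω:ℂ)^4 * (e1:ℂ) * (e2:ℂ)
      + (-1/2 : ℂ) * (Ω:ℂ)^4 * (e1:ℂ)^2
      + (1/24 : ℂ) * (Ω:ℂ)^6 * (e4:ℂ)
      + (-1/18 : ℂ) * (Ω:ℂ)^6 * (e3:ℂ)
      + (1/36 : ℂ) * (Ω:ℂ)^6 * (e3:ℂ)^2
      + (1/24 : ℂ) * (Ω:ℂ)^6 * (e2:ℂ)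
      + (1/24 : ℂ) * (Ω:ℂ)^6 * (e2:ℂ) * (e4:ℂ)
      + (-1/6 : ℂ) * (Ω:ℂ)^6 * (e2:ℂ) * (e3:ℂ)
      + (1/8 : ℂ) * (Ω:ℂ)^6 * (e2:ℂ)^2
      + (-1/12 : ℂ) * (Ω:ℂ)^6 * (e1:ℂ) * (e4:ℂ)
      + (1/6 : ℂ) * (Ω:ℂ)^6 * (e1:ℂ) * (e3:ℂ)
      + (-1/6 : ℂ) * (Ω:ℂ)^6 * (e1:ℂ) * (e2:ℂ)
      + (1/24 : ℂ) * (Ω:ℂ)^6 * (e1:ℂ)^2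
      + (-1/288 : ℂ) * (Ω:ℂ)^8 * (e4:ℂ)
      + (-1/576 : ℂ) * (Ω:ℂ)^8 * (e4:ℂ)^2
      + (1/72 : ℂ) * (Ω:ℂ)^8 * (e3:ℂ) * (e4:ℂ)
      + (-1/72 : ℂ) * (Ω:ℂ)^8 * (e3:ℂ)^2
      + (-1/48 : ℂ) * (Ω:ℂ)^8 * (e2:ℂ) * (e4:ℂ)
      + (1/36 : ℂ) * (Ω:ℂ)^8 * (e2:ℂ) * (e3:ℂ)
      + (-1/96 : ℂ) * (Ω:ℂ)^8 * (e2:ℂ)^2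
      + (1/72 : ℂ) * (Ω:ℂ)^8 * (e1:ℂ) * (e4:ℂ)
      + (-1/72 : ℂ) * (Ω:ℂ)^8 * (e1:ℂ) * (e3:ℂ)
      + (1/1152 : ℂ) * (Ω:ℂ)^10 * (e4:ℂ)^2
      + (-1/432 : ℂ) * (Ω:ℂ)^10 * (e3:ℂ) * (e4:ℂ)
      + (1/864 : ℂ) * (Ω:ℂ)^10 * (e3:ℂ)^2
      + (1/576 : ℂ) * (Ω:ℂ)^10 * (e2:ℂ) * (e4:ℂ)
      + (-1/13824 : ℂ) * (Ω:ℂ)^12 * (e4:ℂ)^2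
      + (1/6 : ℂ) * Complex.I * (Ω:ℂ)^3
      + (-1/3 : ℂ) * Complex.I * (Ω:ℂ)^3 * (e3:ℂ)
      + (1 : ℂ) * Complex.I * (Ω:ℂ)^3 * (e2:ℂ)
      + (-1 : ℂ) * Complex.I * (Ω:ℂ)^3 * (e1:ℂ)
      + (-1 : ℂ) * Complex.I * (Ω:ℂ)^3 * (e1:ℂ) * (e2:ℂ)
      + (1 : ℂ) * Complex.I * (Ω:ℂ)^3 * (e1:ℂ)^2
      + (-1/12 : ℂ) * Complex.I * (Ω:ℂ)^5 * (e4:ℂ)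
      + (1/6 : ℂ) * Complex.I * (Ω:ℂ)^5 * (e3:ℂ)
      + (-1/6 : ℂ) * Complex.I * (Ω:ℂ)^5 * (e2:ℂ)
      + (1/6 : ℂ) * Complex.I * (Ω:ℂ)^5 * (e2:ℂ) * (e3:ℂ)
      + (-1/4 : ℂ) * Complex.I * (Ω:ℂ)^5 * (e2:ℂ)^2
      + (1/12 : ℂ) * Complex.I * (Ω:ℂ)^5 * (e1:ℂ)
      + (1/12 : ℂ) * Complex.I * (Ω:ℂ)^5 * (e1:ℂ) * (e4:ℂ)
      + (-1/3 : ℂ) * Complex.I * (Ω:ℂ)^5 * (e1:ℂ) * (e3:ℂ)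
      + (1/2 : ℂ) * Complex.I * (Ω:ℂ)^5 * (e1:ℂ) * (e2:ℂ)
      + (-1/6 : ℂ) * Complex.I * (Ω:ℂ)^5 * (e1:ℂ)^2
      + (1/72 : ℂ) * Complex.I * (Ω:ℂ)^7 * (e4:ℂ)
      + (-1/72 : ℂ) * Complex.I * (Ω:ℂ)^7 * (e3:ℂ)
      + (-1/72 : ℂ) * Complex.I * (Ω:ℂ)^7 * (e3:ℂ) * (e4:ℂ)
      + (1/36 : ℂ) * Complex.I * (Ω:ℂ)^7 * (e3:ℂ)^2
      + (1/24 : ℂ) * Complex.I * (Ω:ℂ)^7 * (e2:ℂ) * (e4:ℂ)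
      + (-1/12 : ℂ) * Complex.I * (Ω:ℂ)^7 * (e2:ℂ) * (e3:ℂ)
      + (1/24 : ℂ) * Complex.I * (Ω:ℂ)^7 * (e2:ℂ)^2
      + (-1/24 : ℂ) * Complex.I * (Ω:ℂ)^7 * (e1:ℂ) * (e4:ℂ)
      + (1/18 : ℂ) * Complex.I * (Ω:ℂ)^7 * (e1:ℂ) * (e3:ℂ)
      + (-1/24 : ℂ) * Complex.I * (Ω:ℂ)^7 * (e1:ℂ) * (e2:ℂ)
      + (-1/576 : ℂ) * Complex.I * (Ω:ℂ)^9 * (e4:ℂ)^2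
      + (1/144 : ℂ) * Complex.I * (Ω:ℂ)^9 * (e3:ℂ) * (e4:ℂ)
      + (-1/216 : ℂ) * Complex.I * (Ω:ℂ)^9 * (e3:ℂ)^2
      + (-1/144 : ℂ) * Complex.I * (Ω:ℂ)^9 * (e2:ℂ) * (e4:ℂ)
      + (1/144 : ℂ) * Complex.I * (Ω:ℂ)^9 * (e2:ℂ) * (e3:ℂ)
      + (1/288 : ℂ) * Complex.I * (Ω:ℂ)^9 * (e1:ℂ) * (e4:ℂ)
      + (1/3456 : ℂ) * Complex.I * (Ω:ℂ)^11 * (e4:ℂ)^2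
      + (-1/1728 : ℂ) * Complex.I * (Ω:ℂ)^11 * (e3:ℂ) * (e4:ℂ)
      + (1/24 : ℂ) * Complex.I^2 * (Ω:ℂ)^4
      + (1/12 : ℂ) * Complex.I^2 * (Ω:ℂ)^4 * (e4:ℂ)
      + (-1/3 : ℂ) * Complex.I^2 * (Ω:ℂ)^4 * (e3:ℂ)
      + (1/2 : ℂ) * Complex.I^2 * (Ω:ℂ)^4 * (e2:ℂ)
      + (1/4 : ℂ) * Complex.I^2 * (Ω:ℂ)^4 * (e2:ℂ)^2
      + (-1/3 : ℂ) * Complex.I^2 * (Ω:ℂ)^4 * (e1:ℂ)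
      + (1/3 : ℂ) * Complex.I^2 * (Ω:ℂ)^4 * (e1:ℂ) * (e3:ℂ)
      + (-1 : ℂ) * Complex.I^2 * (Ω:ℂ)^4 * (e1:ℂ) * (e2:ℂ)
      + (1/2 : ℂ) * Complex.I^2 * (Ω:ℂ)^4 * (e1:ℂ)^2
      + (-1/24 : ℂ) * Complex.I^2 * (Ω:ℂ)^6 * (e4:ℂ)
      + (1/18 : ℂ) * Complex.I^2 * (Ω:ℂ)^6 * (e3:ℂ)
      + (-1/36 : ℂ) * Complex.I^2 * (Ω:ℂ)^6 * (e3:ℂ)^2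
      + (-1/24 : ℂ) * Complex.I^2 * (Ω:ℂ)^6 * (e2:ℂ)
      + (-1/24 : ℂ) * Complex.I^2 * (Ω:ℂ)^6 * (e2:ℂ) * (e4:ℂ)
      + (1/6 : ℂ) * Complex.I^2 * (Ω:ℂ)^6 * (e2:ℂ) * (e3:ℂ)
      + (-1/8 : ℂ) * Complex.I^2 * (Ω:ℂ)^6 * (e2:ℂ)^2
      + (1/12 : ℂ) * Complex.I^2 * (Ω:ℂ)^6 * (e1:ℂ) * (e4:ℂ)
      + (-1/6 : ℂ) * Complex.I^2 * (Ω:ℂ)^6 * (e1:ℂ) * (e3:ℂ)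
      + (1/6 : ℂ) * Complex.I^2 * (Ω:ℂ)^6 * (e1:ℂ) * (e2:ℂ)
      + (-1/24 : ℂ) * Complex.I^2 * (Ω:ℂ)^6 * (e1:ℂ)^2
      + (1/288 : ℂ) * Complex.I^2 * (Ω:ℂ)^8 * (e4:ℂ)
      + (1/576 : ℂ) * Complex.I^2 * (Ω:ℂ)^8 * (e4:ℂ)^2
      + (-1/72 : ℂ) * Complex.I^2 * (Ω:ℂ)^8 * (e3:ℂ) * (e4:ℂ)
      + (1/72 : ℂ) * Complex.I^2 * (Ω:ℂ)^8 * (e3:ℂ)^2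
      + (1/48 : ℂ) * Complex.I^2 * (Ω:ℂ)^8 * (e2:ℂ) * (e4:ℂ)
      + (-1/36 : ℂ) * Complex.I^2 * (Ω:ℂ)^8 * (e2:ℂ) * (e3:ℂ)
      + (1/96 : ℂ) * Complex.I^2 * (Ω:ℂ)^8 * (e2:ℂ)^2
      + (-1/72 : ℂ) * Complex.I^2 * (Ω:ℂ)^8 * (e1:ℂ) * (e4:ℂ)
      + (1/72 : ℂ) * Complex.I^2 * (Ω:ℂ)^8 * (e1:ℂ) * (e3:ℂ)
      + (-1/1152 : ℂ) * Complex.I^2 * (Ω:ℂ)^10 * (e4:ℂ)^2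
      + (1/432 : ℂ) * Complex.I^2 * (Ω:ℂ)^10 * (e3:ℂ) * (e4:ℂ)
      + (-1/864 : ℂ) * Complex.I^2 * (Ω:ℂ)^10 * (e3:ℂ)^2
      + (-1/576 : ℂ) * Complex.I^2 * (Ω:ℂ)^10 * (e2:ℂ) * (e4:ℂ)
      + (1/13824 : ℂ) * Complex.I^2 * (Ω:ℂ)^12 * (e4:ℂ)^2
      + (1/12 : ℂ) * Complex.I^3 * (Ω:ℂ)^5 * (e4:ℂ)
      + (-1/6 : ℂ) * Complex.I^3 * (Ω:ℂ)^5 * (e3:ℂ)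
      + (1/6 : ℂ) * Complex.I^3 * (Ω:ℂ)^5 * (e2:ℂ)
      + (-1/6 : ℂ) * Complex.I^3 * (Ω:ℂ)^5 * (e2:ℂ) * (e3:ℂ)
      + (1/4 : ℂ) * Complex.I^3 * (Ω:ℂ)^5 * (e2:ℂ)^2
      + (-1/12 : ℂ) * Complex.I^3 * (Ω:ℂ)^5 * (e1:ℂ)
      + (-1/12 : ℂ) * Complex.I^3 * (Ω:ℂ)^5 * (e1:ℂ) * (e4:ℂ)
      + (1/3 : ℂ) * Complex.I^3 * (Ω:ℂ)^5 * (e1:ℂ) * (e3:ℂ)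
      + (-1/2 : ℂ) * Complex.I^3 * (Ω:ℂ)^5 * (e1:ℂ) * (e2:ℂ)
      + (1/6 : ℂ) * Complex.I^3 * (Ω:ℂ)^5 * (e1:ℂ)^2
      + (-1/72 : ℂ) * Complex.I^3 * (Ω:ℂ)^7 * (e4:ℂ)
      + (1/72 : ℂ) * Complex.I^3 * (Ω:ℂ)^7 * (e3:ℂ)
      + (1/72 : ℂ) * Complex.I^3 * (Ω:ℂ)^7 * (e3:ℂ) * (e4:ℂ)
      + (-1/36 : ℂ) * Complex.I^3 * (Ω:ℂ)^7 * (e3:ℂ)^2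
      + (-1/24 : ℂ) * Complex.I^3 * (Ω:ℂ)^7 * (e2:ℂ) * (e4:ℂ)
      + (1/12 : ℂ) * Complex.I^3 * (Ω:ℂ)^7 * (e2:ℂ) * (e3:ℂ)
      + (-1/24 : ℂ) * Complex.I^3 * (Ω:ℂ)^7 * (e2:ℂ)^2
      + (1/24 : ℂ) * Complex.I^3 * (Ω:ℂ)^7 * (e1:ℂ) * (e4:ℂ)
      + (-1/18 : ℂ) * Complex.I^3 * (Ω:ℂ)^7 * (e1:ℂ) * (e3:ℂ)
      + (1/24 : ℂ) * Complex.I^3 * (Ω:ℂ)^7 * (e1:ℂ) * (e2:ℂ)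
      + (1/576 : ℂ) * Complex.I^3 * (Ω:ℂ)^9 * (e4:ℂ)^2
      + (-1/144 : ℂ) * Complex.I^3 * (Ω:ℂ)^9 * (e3:ℂ) * (e4:ℂ)
      + (1/216 : ℂ) * Complex.I^3 * (Ω:ℂ)^9 * (e3:ℂ)^2
      + (1/144 : ℂ) * Complex.I^3 * (Ω:ℂ)^9 * (e2:ℂ) * (e4:ℂ)
      + (-1/144 : ℂ) * Complex.I^3 * (Ω:ℂ)^9 * (e2:ℂ) * (e3:ℂ)
      + (-1/288 : ℂ) * Complex.I^3 * (Ω:ℂ)^9 * (e1:ℂ) * (e4:ℂ)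
      + (-1/3456 : ℂ) * Complex.I^3 * (Ω:ℂ)^11 * (e4:ℂ)^2
      + (1/1728 : ℂ) * Complex.I^3 * (Ω:ℂ)^11 * (e3:ℂ) * (e4:ℂ)
      + (1/24 : ℂ) * Complex.I^4 * (Ω:ℂ)^6 * (e4:ℂ)
      + (-1/18 : ℂ) * Complex.I^4 * (Ω:ℂ)^6 * (e3:ℂ)
      + (1/36 : ℂ) * Complex.I^4 * (Ω:ℂ)^6 * (e3:ℂ)^2
      + (1/24 : ℂ) * Complex.I^4 * (Ω:ℂ)^6 * (e2:ℂ)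
      + (1/24 : ℂ) * Complex.I^4 * (Ω:ℂ)^6 * (e2:ℂ) * (e4:ℂ)
      + (-1/6 : ℂ) * Complex.I^4 * (Ω:ℂ)^6 * (e2:ℂ) * (e3:ℂ)
      + (1/8 : ℂ) * Complex.I^4 * (Ω:ℂ)^6 * (e2:ℂ)^2
      + (-1/12 : ℂ) * Complex.I^4 * (Ω:ℂ)^6 * (e1:ℂ) * (e4:ℂ)
      + (1/6 : ℂ) * Complex.I^4 * (Ω:ℂ)^6 * (e1:ℂ) * (e3:ℂ)
      + (-1/6 : ℂ) * Complex.I^4 * (Ω:ℂ)^6 * (e1:ℂ) * (e2:ℂ)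
      + (1/24 : ℂ) * Complex.I^4 * (Ω:ℂ)^6 * (e1:ℂ)^2
      + (-1/288 : ℂ) * Complex.I^4 * (Ω:ℂ)^8 * (e4:ℂ)
      + (-1/576 : ℂ) * Complex.I^4 * (Ω:ℂ)^8 * (e4:ℂ)^2
      + (1/72 : ℂ) * Complex.I^4 * (Ω:ℂ)^8 * (e3:ℂ) * (e4:ℂ)
      + (-1/72 : ℂ) * Complex.I^4 * (Ω:ℂ)^8 * (e3:ℂ)^2
      + (-1/48 : ℂ) * Complex.I^4 * (Ω:ℂ)^8 * (e2:ℂ) * (e4:ℂ)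
      + (1/36 : ℂ) * Complex.I^4 * (Ω:ℂ)^8 * (e2:ℂ) * (e3:ℂ)
      + (-1/96 : ℂ) * Complex.I^4 * (Ω:ℂ)^8 * (e2:ℂ)^2
      + (1/72 : ℂ) * Complex.I^4 * (Ω:ℂ)^8 * (e1:ℂ) * (e4:ℂ)
      + (-1/72 : ℂ) * Complex.I^4 * (Ω:ℂ)^8 * (e1:ℂ) * (e3:ℂ)
      + (1/1152 : ℂ) * Complex.I^4 * (Ω:ℂ)^10 * (e4:ℂ)^2
      + (-1/432 : ℂ) * Complex.I^4 * (Ω:ℂ)^10 * (e3:ℂ) * (e4:ℂ)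
      + (1/864 : ℂ) * Complex.I^4 * (Ω:ℂ)^10 * (e3:ℂ)^2
      + (1/576 : ℂ) * Complex.I^4 * (Ω:ℂ)^10 * (e2:ℂ) * (e4:ℂ)
      + (-1/13824 : ℂ) * Complex.I^4 * (Ω:ℂ)^12 * (e4:ℂ)^2
      + (1/72 : ℂ) * Complex.I^5 * (Ω:ℂ)^7 * (e4:ℂ)
      + (-1/72 : ℂ) * Complex.I^5 * (Ω:ℂ)^7 * (e3:ℂ)
      + (-1/72 : ℂ) * Complex.I^5 * (Ω:ℂ)^7 * (e3:ℂ) * (e4:ℂ)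
      + (1/36 : ℂ) * Complex.I^5 * (Ω:ℂ)^7 * (e3:ℂ)^2
      + (1/24 : ℂ) * Complex.I^5 * (Ω:ℂ)^7 * (e2:ℂ) * (e4:ℂ)
      + (-1/12 : ℂ) * Complex.I^5 * (Ω:ℂ)^7 * (e2:ℂ) * (e3:ℂ)
      + (1/24 : ℂ) * Complex.I^5 * (Ω:ℂ)^7 * (e2:ℂ)^2
      + (-1/24 : ℂ) * Complex.I^5 * (Ω:ℂ)^7 * (e1:ℂ) * (e4:ℂ)
      + (1/18 : ℂ) * Complex.I^5 * (Ω:ℂ)^7 * (e1:ℂ) * (e3:ℂ)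
      + (-1/24 : ℂ) * Complex.I^5 * (Ω:ℂ)^7 * (e1:ℂ) * (e2:ℂ)
      + (-1/576 : ℂ) * Complex.I^5 * (Ω:ℂ)^9 * (e4:ℂ)^2
      + (1/144 : ℂ) * Complex.I^5 * (Ω:ℂ)^9 * (e3:ℂ) * (e4:ℂ)
      + (-1/216 : ℂ) * Complex.I^5 * (Ω:ℂ)^9 * (e3:ℂ)^2
      + (-1/144 : ℂ) * Complex.I^5 * (Ω:ℂ)^9 * (e2:ℂ) * (e4:ℂ)
      + (1/144 : ℂ) * Complex.I^5 * (Ω:ℂ)^9 * (e2:ℂ) * (e3:ℂ)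
      + (1/288 : ℂ) * Complex.I^5 * (Ω:ℂ)^9 * (e1:ℂ) * (e4:ℂ)
      + (1/3456 : ℂ) * Complex.I^5 * (Ω:ℂ)^11 * (e4:ℂ)^2
      + (-1/1728 : ℂ) * Complex.I^5 * (Ω:ℂ)^11 * (e3:ℂ) * (e4:ℂ)
      + (1/288 : ℂ) * Complex.I^6 * (Ω:ℂ)^8 * (e4:ℂ)
      + (1/576 : ℂ) * Complex.I^6 * (Ω:ℂ)^8 * (e4:ℂ)^2
      + (-1/72 : ℂ) * Complex.I^6 * (Ω:ℂ)^8 * (e3:ℂ) * (e4:ℂ)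
      + (1/72 : ℂ) * Complex.I^6 * (Ω:ℂ)^8 * (e3:ℂ)^2
      + (1/48 : ℂ) * Complex.I^6 * (Ω:ℂ)^8 * (e2:ℂ) * (e4:ℂ)
      + (-1/36 : ℂ) * Complex.I^6 * (Ω:ℂ)^8 * (e2:ℂ) * (e3:ℂ)
      + (1/96 : ℂ) * Complex.I^6 * (Ω:ℂ)^8 * (e2:ℂ)^2
      + (-1/72 : ℂ) * Complex.I^6 * (Ω:ℂ)^8 * (e1:ℂ) * (e4:ℂ)
      + (1/72 : ℂ) * Complex.I^6 * (Ω:ℂ)^8 * (e1:ℂ) * (e3:ℂ)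
      + (-1/1152 : ℂ) * Complex.I^6 * (Ω:ℂ)^10 * (e4:ℂ)^2
      + (1/432 : ℂ) * Complex.I^6 * (Ω:ℂ)^10 * (e3:ℂ) * (e4:ℂ)
      + (-1/864 : ℂ) * Complex.I^6 * (Ω:ℂ)^10 * (e3:ℂ)^2
      + (-1/576 : ℂ) * Complex.I^6 * (Ω:ℂ)^10 * (e2:ℂ) * (e4:ℂ)
      + (1/13824 : ℂ) * Complex.I^6 * (Ω:ℂ)^12 * (e4:ℂ)^2
      + (1/576 : ℂ) * Complex.I^7 * (Ω:ℂ)^9 * (e4:ℂ)^2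
      + (-1/144 : ℂ) * Complex.I^7 * (Ω:ℂ)^9 * (e3:ℂ) * (e4:ℂ)
      + (1/216 : ℂ) * Complex.I^7 * (Ω:ℂ)^9 * (e3:ℂ)^2
      + (1/144 : ℂ) * Complex.I^7 * (Ω:ℂ)^9 * (e2:ℂ) * (e4:ℂ)
      + (-1/144 : ℂ) * Complex.I^7 * (Ω:ℂ)^9 * (e2:ℂ) * (e3:ℂ)
      + (-1/288 : ℂ) * Complex.I^7 * (Ω:ℂ)^9 * (e1:ℂ) * (e4:ℂ)
      + (-1/3456 : ℂ) * Complex.I^7 * (Ω:ℂ)^11 * (e4:ℂ)^2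
      + (1/1728 : ℂ) * Complex.I^7 * (Ω:ℂ)^11 * (e3:ℂ) * (e4:ℂ)
      + (1/1152 : ℂ) * Complex.I^8 * (Ω:ℂ)^10 * (e4:ℂ)^2
      + (-1/432 : ℂ) * Complex.I^8 * (Ω:ℂ)^10 * (e3:ℂ) * (e4:ℂ)
      + (1/864 : ℂ) * Complex.I^8 * (Ω:ℂ)^10 * (e3:ℂ)^2
      + (1/576 : ℂ) * Complex.I^8 * (Ω:ℂ)^10 * (e2:ℂ) * (e4:ℂ)
      + (-1/13824 : ℂ) * Complex.I^8 * (Ω:ℂ)^12 * (e4:ℂ)^2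
      + (1/3456 : ℂ) * Complex.I^9 * (Ω:ℂ)^11 * (e4:ℂ)^2
      + (-1/1728 : ℂ) * Complex.I^9 * (Ω:ℂ)^11 * (e3:ℂ) * (e4:ℂ)
      + (1/13824 : ℂ) * Complex.I^10 * (Ω:ℂ)^12 * (e4:ℂ)^2) * Complex.I_sq

end Aux

section Ana

lemma cast_pow5_isBigO : (fun Ω : ℝ => ((Ω:ℂ))^5) =O[𝓝 0] (fun Ω : ℝ => Ω^5) := by
  apply Asymptotics.isBigO_of_le
  intro x
  simp [Real.norm_eq_abs, abs_pow]

lemma continuous_Fm (N : ℕ) : Continuous (fun Ω : ℝ => Fm N Ω) := by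
  unfold Fm hypF
  apply continuous_finset_sum
  intro m _
  fun_prop

/-- degree ≤ 4 truncation of `Fm`. -/
noncomputable def Af (N : ℕ) (Ω : ℝ) : ℂ := hypF (-(N : ℂ)) (-(2 * (N : ℂ) + 1)) 4 (-(I * Ω))

lemma continuous_Af (N : ℕ) : Continuous (fun Ω : ℝ => Af N Ω) := by
  unfold Af hypF
  apply continuous_finset_sum
  intro m _
  fun_prop

lemma Fm_approx (N : ℕ) :
    (fun Ω : ℝ => Fm N Ω - Af N Ω) =O[𝓝 0] fun Ω : ℝ => Ω ^ 5 := by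
  have key : ∀ Ω : ℝ, Fm N Ω - Af N Ω =
      ((Ω:ℂ))^5 * ∑ m ∈ Finset.Ico 5 (max (N+1) 5),
        ((ascPochhammer ℂ m).eval (-(N:ℂ)) / (ascPochhammer ℂ m).eval (-(2 * (N:ℂ) + 1)))
          * (-I) ^ m * ((Ω:ℂ)) ^ (m - 5) / (Nat.factorial m) := by
    intro Ω
    have h1 : Fm N Ω = ∑ m ∈ Finset.range (max (N+1) 5),
        ((ascPochhammer ℂ m).eval (-(N:ℂ)) / (ascPochhammer ℂ m).eval (-(2 * (N:ℂ) + 1)))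
          * (-(I * (Ω:ℂ))) ^ m / (Nat.factorial m) := by
      rw [Fm, hypF]
      apply Finset.sum_subset (Finset.range_subset_range.2 (le_max_left _ _))
      intro m hm hnm
      simp only [Finset.mem_range, not_lt] at hnm
      rw [ascPochhammer_eval_neg_coe_nat_of_lt (by omega), zero_div, zero_mul, zero_div]
    rw [h1, ← Finset.sum_range_add_sum_Ico _ (le_max_right (N+1) 5), Finset.mul_sum]
    have h2 : Af N Ω = ∑ m ∈ Finset.range 5,
        ((ascPochhammer ℂ m).eval (-(N:ℂ)) / (ascPochhammer ℂ m).eval (-(2 * (N:ℂ) + 1)))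
          * (-(I * (Ω:ℂ))) ^ m / (Nat.factorial m) := rfl
    rw [h2, add_sub_cancel_left]
    apply Finset.sum_congr rfl
    intro m hm
    obtain ⟨h5, _⟩ := Finset.mem_Ico.1 hm
    have hpow : (-(I * (Ω:ℂ))) ^ m = (-I) ^ m * ((Ω:ℂ))^5 * ((Ω:ℂ)) ^ (m - 5) := by
      have h' : ((Ω:ℂ))^m = ((Ω:ℂ))^5 * ((Ω:ℂ)) ^ (m - 5) := by
        rw [← pow_add]; congr 1; omega
      rw [show -(I * (Ω:ℂ)) = (-I) * (Ω:ℂ) by ring, mul_pow, h', mul_assoc]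
    rw [hpow]; ring
  have hS : Continuous (fun Ω : ℝ => ∑ m ∈ Finset.Ico 5 (max (N+1) 5),
      ((ascPochhammer ℂ m).eval (-(N:ℂ)) / (ascPochhammer ℂ m).eval (-(2 * (N:ℂ) + 1)))
        * (-I) ^ m * ((Ω:ℂ)) ^ (m - 5) / (Nat.factorial m)) := by
    apply continuous_finset_sum
    intro m _
    fun_prop
  simp only [key]
  simpa using cast_pow5_isBigO.mul ((hS.tendsto 0).isBigO_one ℝ)

lemma exp_approx :
    (fun Ω : ℝ => Complex.exp (I * Ω)
        - ∑ k ∈ Finset.range 5, (I * (Ω:ℂ)) ^ k / (Nat.factorial k))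
      =O[𝓝 0] fun Ω : ℝ => Ω ^ 5 := by
  rw [Asymptotics.isBigO_iff]
  refine ⟨(6:ℝ) * (600:ℝ)⁻¹, ?_⟩
  have h1 : ∀ᶠ Ω : ℝ in 𝓝 0, |Ω| ≤ 1 := by
    filter_upwards [Metric.ball_mem_nhds (0:ℝ) one_pos] with x hx
    rw [Metric.mem_ball, Real.dist_eq, sub_zero] at hx
    exact le_of_lt hx
  filter_upwards [h1] with Ω hΩ
  have hx : ‖I * (Ω:ℂ)‖ ≤ 1 := by
    rw [norm_mul, Complex.norm_I, one_mul, Complex.norm_real, Real.norm_eq_abs]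
    exact hΩ
  have hb := Complex.exp_bound hx (by norm_num : 0 < 5)
  refine le_trans hb (le_of_eq ?_)
  rw [norm_mul, Complex.norm_I, one_mul, Complex.norm_real, Real.norm_eq_abs, Real.norm_eq_abs, _root_.abs_pow]
  norm_num [Nat.factorial]
  ring

end Ana

section Main

lemma Fm_zero (N : ℕ) : Fm N 0 = 1 := by
  rw [Fm, hypF]
  rw [Finset.sum_eq_single 0]
  · simp [ascPochhammer_zero]
  · intro m _ hm
    simp [Complex.ofReal_zero, mul_zero, zero_pow hm]
  · simp

lemma Hq_zero (N : ℕ) : Hq N 0 = 1 := by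
  rw [Hq, Fm_zero]
  simp

lemma Tsum_eq (Ω : ℝ) :
    (∑ k ∈ Finset.range 5, (I * (Ω:ℂ)) ^ k / (Nat.factorial k))
      = (1:ℂ) + (I*(Ω:ℂ)) + (I*(Ω:ℂ))^2/2 + (I*(Ω:ℂ))^3/6 + (I*(Ω:ℂ))^4/24 := by
  simp [Finset.sum_range_succ, Nat.factorial]

lemma Af_eq (N : ℕ) (e1 e2 e3 e4 : ℝ)
    (hE1 : (ascPochhammer ℂ 1).eval (-(N:ℂ)) / (ascPochhammer ℂ 1).eval (-(2 * (N:ℂ) + 1)) = (e1:ℂ))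
    (hE2 : (ascPochhammer ℂ 2).eval (-(N:ℂ)) / (ascPochhammer ℂ 2).eval (-(2 * (N:ℂ) + 1)) = (e2:ℂ))
    (hE3 : (ascPochhammer ℂ 3).eval (-(N:ℂ)) / (ascPochhammer ℂ 3).eval (-(2 * (N:ℂ) + 1)) = (e3:ℂ))
    (hE4 : (ascPochhammer ℂ 4).eval (-(N:ℂ)) / (ascPochhammer ℂ 4).eval (-(2 * (N:ℂ) + 1)) = (e4:ℂ))
    (Ω : ℝ) :
    Af N Ω = (1:ℂ) + (e1:ℂ)*(-(I*(Ω:ℂ))) + (e2:ℂ)*(-(I*(Ω:ℂ)))^2/2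
        + (e3:ℂ)*(-(I*(Ω:ℂ)))^3/6 + (e4:ℂ)*(-(I*(Ω:ℂ)))^4/24 := by
  rw [Af, hypF]
  rw [show (4:ℕ)+1 = 5 from rfl]
  simp only [Finset.sum_range_succ, Finset.sum_range_zero]
  rw [hE1, hE2, hE3, hE4]
  simp [ascPochhammer_zero, Nat.factorial]

lemma Hq_approx (N : ℕ) (e1 e2 e3 e4 : ℝ)
    (hE1 : (ascPochhammer ℂ 1).eval (-(N:ℂ)) / (ascPochhammer ℂ 1).eval (-(2 * (N:ℂ) + 1)) = (e1:ℂ))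
    (hE2 : (ascPochhammer ℂ 2).eval (-(N:ℂ)) / (ascPochhammer ℂ 2).eval (-(2 * (N:ℂ) + 1)) = (e2:ℂ))
    (hE3 : (ascPochhammer ℂ 3).eval (-(N:ℂ)) / (ascPochhammer ℂ 3).eval (-(2 * (N:ℂ) + 1)) = (e3:ℂ))
    (hE4 : (ascPochhammer ℂ 4).eval (-(N:ℂ)) / (ascPochhammer ℂ 4).eval (-(2 * (N:ℂ) + 1)) = (e4:ℂ)) :
    (fun Ω : ℝ => Hq N Ω - (((Uf e1 e2 e3 e4 Ω : ℝ) : ℂ) + I * ((Vf e1 e2 e3 e4 Ω : ℝ) : ℂ)))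
      =O[𝓝 0] fun Ω : ℝ => Ω ^ 5 := by
  have hexpc : Continuous fun Ω : ℝ => Complex.exp (I * (Ω:ℂ)) := by fun_prop
  have hWc : Continuous fun Ω : ℝ => Wf e1 e2 e3 e4 Ω := by
    unfold Wf; fun_prop
  have hdec : ∀ Ω : ℝ, Hq N Ω - (((Uf e1 e2 e3 e4 Ω : ℝ) : ℂ) + I * ((Vf e1 e2 e3 e4 Ω : ℝ) : ℂ))
      = (Fm N Ω - Af N Ω) * ((Fm N Ω + Af N Ω) * Complex.exp (I * (Ω:ℂ)))
        + (Af N Ω)^2 * (Complex.exp (I * (Ω:ℂ))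
            - ∑ k ∈ Finset.range 5, (I * (Ω:ℂ)) ^ k / (Nat.factorial k))
        + ((Ω:ℂ))^5 * Wf e1 e2 e3 e4 Ω := by
    intro Ω
    have hc := core_id Ω e1 e2 e3 e4
    rw [← Af_eq N e1 e2 e3 e4 hE1 hE2 hE3 hE4 Ω, ← Tsum_eq Ω] at hc
    rw [Hq]
    linear_combination hc
  simp only [hdec]
  have h1 : (fun Ω : ℝ => (Fm N Ω - Af N Ω) * ((Fm N Ω + Af N Ω) * Complex.exp (I * (Ω:ℂ))))
      =O[𝓝 0] fun Ω : ℝ => Ω ^ 5 := by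
    have hb : Continuous fun Ω : ℝ => (Fm N Ω + Af N Ω) * Complex.exp (I * (Ω:ℂ)) :=
      ((continuous_Fm N).add (continuous_Af N)).mul hexpc
    simpa using (Fm_approx N).mul ((hb.tendsto 0).isBigO_one ℝ)
  have h2 : (fun Ω : ℝ => (Af N Ω)^2 * (Complex.exp (I * (Ω:ℂ))
      - ∑ k ∈ Finset.range 5, (I * (Ω:ℂ)) ^ k / (Nat.factorial k)))
      =O[𝓝 0] fun Ω : ℝ => Ω ^ 5 := by
    have hb : Continuous fun Ω : ℝ => (Af N Ω)^2 := (continuous_Af N).pow 2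
    simpa using ((hb.tendsto 0).isBigO_one ℝ).mul exp_approx
  have h3 : (fun Ω : ℝ => ((Ω:ℂ))^5 * Wf e1 e2 e3 e4 Ω) =O[𝓝 0] fun Ω : ℝ => Ω ^ 5 := by
    simpa using cast_pow5_isBigO.mul ((hWc.tendsto 0).isBigO_one ℝ)
  simpa using (h1.add h2).add h3

lemma main_expansion (N : ℕ) (e1 e2 e3 e4 : ℝ)
    (hE1 : (ascPochhammer ℂ 1).eval (-(N:ℂ)) / (ascPochhammer ℂ 1).eval (-(2 * (N:ℂ) + 1)) = (e1:ℂ))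
    (hE2 : (ascPochhammer ℂ 2).eval (-(N:ℂ)) / (ascPochhammer ℂ 2).eval (-(2 * (N:ℂ) + 1)) = (e2:ℂ))
    (hE3 : (ascPochhammer ℂ 3).eval (-(N:ℂ)) / (ascPochhammer ℂ 3).eval (-(2 * (N:ℂ) + 1)) = (e3:ℂ))
    (hE4 : (ascPochhammer ℂ 4).eval (-(N:ℂ)) / (ascPochhammer ℂ 4).eval (-(2 * (N:ℂ) + 1)) = (e4:ℂ))
    (hq1 : 1 - 2*e1 = 1/(2*(N:ℝ)+1))
    (hq3 : e1*e2 + e3/3 - e1^2 - e2 + e1 - 1/6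
        = (-e1^2 - e2 + 2*e1 - 1/2) * (1/(2*(N:ℝ)+1)) + (N:ℝ)/(2*(N:ℝ)-1) * (1/(2*(N:ℝ)+1))^3) :
    (fun Ω : ℝ => (Hq N Ω).im / (Hq N Ω).re
        - Ω / (2 * (N : ℝ) + 1)
            * (1 + ((N : ℝ) / (2 * (N : ℝ) - 1)) * (Ω / (2 * (N : ℝ) + 1)) ^ 2))
      =O[𝓝 0] fun Ω : ℝ => Ω ^ 5 := by
  set P : ℝ → ℝ := fun Ω => Ω / (2 * (N : ℝ) + 1)
      * (1 + ((N : ℝ) / (2 * (N : ℝ) - 1)) * (Ω / (2 * (N : ℝ) + 1)) ^ 2) with hP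
  have hB := Hq_approx N e1 e2 e3 e4 hE1 hE2 hE3 hE4
  -- real and imaginary part approximations
  have hre : (fun Ω : ℝ => (Hq N Ω).re - Uf e1 e2 e3 e4 Ω) =O[𝓝 0] fun Ω : ℝ => Ω ^ 5 := by
    have hb : (fun Ω : ℝ => (Hq N Ω - (((Uf e1 e2 e3 e4 Ω : ℝ) : ℂ)
        + I * ((Vf e1 e2 e3 e4 Ω : ℝ) : ℂ))).re) =O[𝓝 0]
        (fun Ω : ℝ => Hq N Ω - (((Uf e1 e2 e3 e4 Ω : ℝ) : ℂ)
        + I * ((Vf e1 e2 e3 e4 Ω : ℝ) : ℂ))) := by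
      apply Asymptotics.isBigO_of_le
      intro x
      rw [Real.norm_eq_abs]
      exact Complex.abs_re_le_norm _
    have := hb.trans hB
    simpa using this
  have him : (fun Ω : ℝ => (Hq N Ω).im - Vf e1 e2 e3 e4 Ω) =O[𝓝 0] fun Ω : ℝ => Ω ^ 5 := by
    have hb : (fun Ω : ℝ => (Hq N Ω - (((Uf e1 e2 e3 e4 Ω : ℝ) : ℂ)
        + I * ((Vf e1 e2 e3 e4 Ω : ℝ) : ℂ))).im) =O[𝓝 0]
        (fun Ω : ℝ => Hq N Ω - (((Uf e1 e2 e3 e4 Ω : ℝ) : ℂ)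
        + I * ((Vf e1 e2 e3 e4 Ω : ℝ) : ℂ))) := by
      apply Asymptotics.isBigO_of_le
      intro x
      rw [Real.norm_eq_abs]
      exact Complex.abs_im_le_norm _
    have := hb.trans hB
    simpa using this
  -- polynomial identity for V - U * P
  have hVU : ∀ Ω : ℝ, Vf e1 e2 e3 e4 Ω - Uf e1 e2 e3 e4 Ω * P Ω
      = Ω^5 * (-((-e1^2 - e2 + 2*e1 - 1/2) * ((N:ℝ)/(2*(N:ℝ)-1) * (1/(2*(N:ℝ)+1))^3)
            + (e2^2/4 + e1*e3/3 + e4/12 - e1*e2 - e3/3 + e1^2/2 + e2/2 - e1/3 + 1/24)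
              * (1/(2*(N:ℝ)+1)))
          - (e2^2/4 + e1*e3/3 + e4/12 - e1*e2 - e3/3 + e1^2/2 + e2/2 - e1/3 + 1/24)
              * ((N:ℝ)/(2*(N:ℝ)-1) * (1/(2*(N:ℝ)+1))^3) * Ω^2) := by
    intro Ω
    rw [hP]
    unfold Uf Vf
    linear_combination (Ω : ℝ) * hq1 + Ω^3 * hq3
  have hRc : Continuous fun Ω : ℝ =>
      (-((-e1^2 - e2 + 2*e1 - 1/2) * ((N:ℝ)/(2*(N:ℝ)-1) * (1/(2*(N:ℝ)+1))^3)
            + (e2^2/4 + e1*e3/3 + e4/12 - e1*e2 - e3/3 + e1^2/2 + e2/2 - e1/3 + 1/24)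
              * (1/(2*(N:ℝ)+1)))
          - (e2^2/4 + e1*e3/3 + e4/12 - e1*e2 - e3/3 + e1^2/2 + e2/2 - e1/3 + 1/24)
              * ((N:ℝ)/(2*(N:ℝ)-1) * (1/(2*(N:ℝ)+1))^3) * Ω^2) := by fun_prop
  have hVP : (fun Ω : ℝ => Vf e1 e2 e3 e4 Ω - Uf e1 e2 e3 e4 Ω * P Ω)
      =O[𝓝 0] fun Ω : ℝ => Ω ^ 5 := by
    simp only [hVU]
    simpa using (Asymptotics.isBigO_refl (fun Ω : ℝ => Ω^5) (𝓝 0)).mul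
      ((hRc.tendsto 0).isBigO_one ℝ)
  -- continuity of P
  have hPc : Continuous P := by rw [hP]; fun_prop
  have hPO1 : P =O[𝓝 0] (1 : ℝ → ℝ) := (hPc.tendsto 0).isBigO_one ℝ
  -- numerator estimate
  have hnum : (fun Ω : ℝ => (Hq N Ω).im - (Hq N Ω).re * P Ω) =O[𝓝 0] fun Ω : ℝ => Ω ^ 5 := by
    have hid : ∀ Ω : ℝ, (Hq N Ω).im - (Hq N Ω).re * P Ω
        = ((Hq N Ω).im - Vf e1 e2 e3 e4 Ω) + (Vf e1 e2 e3 e4 Ω - Uf e1 e2 e3 e4 Ω * P Ω)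
          + (Uf e1 e2 e3 e4 Ω - (Hq N Ω).re) * P Ω := by
      intro Ω; ring
    simp only [hid]
    have h3 : (fun Ω : ℝ => (Uf e1 e2 e3 e4 Ω - (Hq N Ω).re) * P Ω)
        =O[𝓝 0] fun Ω : ℝ => Ω ^ 5 := by
      have : (fun Ω : ℝ => Uf e1 e2 e3 e4 Ω - (Hq N Ω).re) =O[𝓝 0] fun Ω : ℝ => Ω ^ 5 := by
        have := hre.neg_left
        simpa [neg_sub] using this
      simpa using this.mul hPO1
    simpa using (him.add hVP).add h3
  -- denominator tends to 1
  have hHqc : Continuous fun Ω : ℝ => Hq N Ω := by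
    unfold Hq
    exact ((continuous_Fm N).pow 2).mul (by fun_prop)
  have hut : Tendsto (fun Ω : ℝ => (Hq N Ω).re) (𝓝 0) (𝓝 1) := by
    have : Continuous fun Ω : ℝ => (Hq N Ω).re := Complex.continuous_re.comp hHqc
    apply this.tendsto' 0 1
    rw [Hq_zero]; simp
  have hne : ∀ᶠ Ω : ℝ in 𝓝 0, (Hq N Ω).re ≠ 0 := hut.eventually_ne one_ne_zero
  have hinv : (fun Ω : ℝ => ((Hq N Ω).re)⁻¹) =O[𝓝 0] (1 : ℝ → ℝ) :=
    ((hut.inv₀ one_ne_zero).isBigO_one ℝ)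
  have heq : (fun Ω : ℝ => (Hq N Ω).im / (Hq N Ω).re - P Ω)
      =ᶠ[𝓝 0] fun Ω : ℝ => ((Hq N Ω).im - (Hq N Ω).re * P Ω) * ((Hq N Ω).re)⁻¹ := by
    filter_upwards [hne] with Ω h
    field_simp
  refine heq.trans_isBigO ?_
  simpa using hnum.mul hinv

end Main

/-- for `N ≥ 1`, as `Ω → 0`,
`Im(H_N)/Re(H_N) = (Ω/(2N+1))·(1 + (N/(2N-1))(Ω/(2N+1))²) + O(Ω⁵)`. -/
theorem Hq_ratio_expansion (N : ℕ) (hN : 1 ≤ N) :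
    (fun Ω : ℝ => (Hq N Ω).im / (Hq N Ω).re
        - Ω / (2 * (N : ℝ) + 1)
            * (1 + ((N : ℝ) / (2 * (N : ℝ) - 1)) * (Ω / (2 * (N : ℝ) + 1)) ^ 2))
      =O[𝓝 0] fun Ω : ℝ => Ω ^ 5 := by
  rcases eq_or_lt_of_le hN with h1 | h2
  · -- N = 1
    subst h1
    apply main_expansion 1 (1/3) 0 0 0
    · rw [asc1_eval, asc1_eval]; norm_num
    · rw [asc2_eval, asc2_eval]; norm_num
    · rw [asc3_eval, asc3_eval]; norm_num
    · rw [asc4_eval, asc4_eval]; norm_num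
    · norm_num
    · norm_num
  · -- 2 ≤ N
    have hN2 : 2 ≤ N := h2
    have c1 : (2*(N:ℂ)+1) ≠ 0 := by
      have h : ((2*(N:ℤ)+1 : ℤ) : ℂ) ≠ 0 := Int.cast_ne_zero.2 (by omega)
      push_cast at h; exact h
    have c2 : (N:ℂ) ≠ 0 := Nat.cast_ne_zero.2 (by omega)
    have c3 : (2*(N:ℂ)-1) ≠ 0 := by
      have h : ((2*(N:ℤ)-1 : ℤ) : ℂ) ≠ 0 := Int.cast_ne_zero.2 (by omega)
      push_cast at h; exact h
    have c4 : ((N:ℂ)-1) ≠ 0 := by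
      have h : (((N:ℤ)-1 : ℤ) : ℂ) ≠ 0 := Int.cast_ne_zero.2 (by omega)
      push_cast at h; exact h
    have d0 : -(2*(N:ℂ)+1) ≠ 0 := neg_ne_zero.2 c1
    have d1 : -(2*(N:ℂ)+1)+1 ≠ 0 := by
      have h : -(2*(N:ℂ)+1)+1 = -(2*(N:ℂ)) := by ring
      rw [h, neg_ne_zero]
      exact mul_ne_zero two_ne_zero c2
    have d2 : -(2*(N:ℂ)+1)+2 ≠ 0 := by
      have h : -(2*(N:ℂ)+1)+2 = -(2*(N:ℂ)-1) := by ring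
      rw [h, neg_ne_zero]
      exact c3
    have d3 : -(2*(N:ℂ)+1)+3 ≠ 0 := by
      have h : -(2*(N:ℂ)+1)+3 = -(2*((N:ℂ)-1)) := by ring
      rw [h, neg_ne_zero]
      exact mul_ne_zero two_ne_zero c4
    have r1 : (2*(N:ℝ)+1) ≠ 0 := by positivity
    have hNR : (1:ℝ) ≤ (N:ℝ) := by exact_mod_cast hN
    have r3 : (2*(N:ℝ)-1) ≠ 0 := by
      have : (0:ℝ) < 2*(N:ℝ)-1 := by linarith
      exact ne_of_gt this
    apply main_expansion N ((N:ℝ)/(2*(N:ℝ)+1)) (((N:ℝ)-1)/(2*(2*(N:ℝ)+1)))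
      ((((N:ℝ)-1)*((N:ℝ)-2))/(2*(2*(N:ℝ)+1)*(2*(N:ℝ)-1)))
      ((((N:ℝ)-2)*((N:ℝ)-3))/(4*(2*(N:ℝ)+1)*(2*(N:ℝ)-1)))
    · rw [asc1_eval, asc1_eval]; push_cast
      rw [div_eq_div_iff d0 c1]; ring
    · rw [asc2_eval, asc2_eval]; push_cast
      rw [div_eq_div_iff (mul_ne_zero d0 d1) (mul_ne_zero two_ne_zero c1)]; ring
    · rw [asc3_eval, asc3_eval]; push_cast
      rw [div_eq_div_iff (mul_ne_zero (mul_ne_zero d0 d1) d2)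
        (mul_ne_zero (mul_ne_zero two_ne_zero c1) c3)]; ring
    · rw [asc4_eval, asc4_eval]; push_cast
      rw [div_eq_div_iff (mul_ne_zero (mul_ne_zero (mul_ne_zero d0 d1) d2) d3)
        (mul_ne_zero (mul_ne_zero (by norm_num : (4:ℂ) ≠ 0) c1) c3)]; ring
    · field_simp; ring
    · have r3' : (N:ℝ) * 2 - 1 ≠ 0 := by rwa [mul_comm]
      have r1' : (N:ℝ) * 2 + 1 ≠ 0 := by rwa [mul_comm]
      field_simp; ring
end
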